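/- arXiv:2309.09313 — 6 statements merged into one kernel-verified Lean document; each statement's English description precedes it below -/
import Mathlib

section
/- Duality Theorem of Kantorovich: Let (M,d) be a metric space and let μ ∈ F̃(M). Then the supremum of Σ_{x∈M} μ(x)·f(x) over all 1-Lipschitz functions f: M → ℝ equals the transportation cost norm ‖μ‖_tc of μ. -/
open scoped BigOperators Classical

/-- `μ` admits the molecular representation `μ = ∑ j, r j • (δ_{x j} - δ_{y j})`
with positive coefficients and distinct endpoints. -/
def IsMolRep {M : Type*} (μ : M → ℝ) {n : ℕ} (r : Fin n → ℝ) (x y : Fin n → M) : Prop :=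
  (∀ j, 0 < r j) ∧ (∀ j, x j ≠ y j) ∧
    ∀ m, μ m = ∑ j, r j * ((if x j = m then (1 : ℝ) else 0) - (if y j = m then (1 : ℝ) else 0))

/-- The transportation cost of a molecular representation. -/
def molCost {M : Type*} (d : M → M → ℝ) {n : ℕ} (r : Fin n → ℝ) (x y : Fin n → M) : ℝ :=
  ∑ j, r j * d (x j) (y j)

/-- The transportation cost norm: infimum of the costs of all molecular representations. -/
noncomputable def tcNorm {M : Type*} (d : M → M → ℝ) (μ : M → ℝ) : ℝ :=
  sInf { c | ∃ (n : ℕ) (r : Fin n → ℝ) (x y : Fin n → M), IsMolRep μ r x y ∧ c = molCost d r x y }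

noncomputable def totalMass (M : Type*) : (M →₀ ℝ) →ₗ[ℝ] ℝ :=
  Finsupp.lsum ℝ fun _ => LinearMap.id

lemma totalMass_apply {M : Type*} (p : M →₀ ℝ) : totalMass M p = p.sum fun _ v => v := rfl

lemma totalMass_single {M : Type*} (a : M) (t : ℝ) : totalMass M (Finsupp.single a t) = t := by
  simp [totalMass]

lemma exists_molRep {M : Type*} (μ : M →₀ ℝ) (hμ : (μ.sum fun _ v => v) = 0) :
    ∃ (n : ℕ) (r : Fin n → ℝ) (x y : Fin n → M), IsMolRep ⇑μ r x y := by
  classical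
  generalize hk : μ.support.card = k
  induction k using Nat.strong_induction_on generalizing μ with
  | _ k ih =>
  rcases Nat.eq_zero_or_pos k with hk0 | hkpos
  · subst hk0
    have h0 : μ = 0 := by
      rwa [Finset.card_eq_zero, Finsupp.support_eq_empty] at hk
    exact ⟨0, Fin.elim0, Fin.elim0, Fin.elim0,
      fun j => j.elim0, fun j => j.elim0, fun m => by simp [h0]⟩
  · have hsupne : μ.support.Nonempty := by
      rw [← Finset.card_pos, hk]; exact hkpos
    have hsum : ∑ m ∈ μ.support, μ m = 0 := hμ
    have hexa : ∃ a ∈ μ.support, 0 < μ a := by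
      by_contra h
      push_neg at h
      obtain ⟨a, ha⟩ := hsupne
      have hlt : ∑ m ∈ μ.support, μ m < ∑ m ∈ μ.support, (0 : ℝ) := by
        refine Finset.sum_lt_sum h ⟨a, ha, ?_⟩
        exact lt_of_le_of_ne (h a ha) (Finsupp.mem_support_iff.1 ha)
      simp [hsum] at hlt
    have hexb : ∃ b ∈ μ.support, μ b < 0 := by
      by_contra h
      push_neg at h
      obtain ⟨a, ha⟩ := hsupne
      have hlt : ∑ m ∈ μ.support, (0 : ℝ) < ∑ m ∈ μ.support, μ m := by
        refine Finset.sum_lt_sum h ⟨a, ha, ?_⟩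
        exact lt_of_le_of_ne (h a ha) (Ne.symm (Finsupp.mem_support_iff.1 ha))
      simp [hsum] at hlt
    obtain ⟨a, _, hapos⟩ := hexa
    obtain ⟨b, _, hbneg⟩ := hexb
    have hab : a ≠ b := by intro h; rw [h] at hapos; linarith
    set t : ℝ := min (μ a) (-μ b) with htdef
    have htpos : 0 < t := lt_min hapos (by linarith)
    set ν : M →₀ ℝ := μ - Finsupp.single a t + Finsupp.single b t with hν
    have hνapp : ∀ m, ν m = μ m - (if a = m then t else 0) + (if b = m then t else 0) := by
      intro m
      simp [hν, Finsupp.single_apply, Finsupp.sub_apply, Finsupp.add_apply]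
    have hνsum : (ν.sum fun _ v => v) = 0 := by
      have : totalMass M ν = 0 := by
        rw [hν, map_add, map_sub, totalMass_single, totalMass_single, totalMass_apply, hμ]
        ring
      rwa [totalMass_apply] at this
    have hsub : ν.support ⊆ μ.support := by
      intro m hm
      rw [Finsupp.mem_support_iff] at hm ⊢
      intro h0
      apply hm
      have hma : a ≠ m := by rintro rfl; exact (Finsupp.mem_support_iff.1 ‹a ∈ μ.support›) h0
      have hmb : b ≠ m := by rintro rfl; exact (Finsupp.mem_support_iff.1 ‹b ∈ μ.support›) h0
      rw [hνapp m, if_neg hma, if_neg hmb, h0]; ring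
    have hssub : ν.support ⊂ μ.support := by
      refine Finset.ssubset_iff_of_subset hsub |>.2 ?_
      rcases le_total (μ a) (-μ b) with hc | hc
      · refine ⟨a, ‹a ∈ μ.support›, ?_⟩
        rw [Finsupp.mem_support_iff, not_not, hνapp a, if_pos rfl, if_neg (Ne.symm hab)]
        rw [htdef, min_eq_left hc]; ring
      · refine ⟨b, ‹b ∈ μ.support›, ?_⟩
        rw [Finsupp.mem_support_iff, not_not, hνapp b, if_neg hab, if_pos rfl]
        rw [htdef, min_eq_right hc]; ring
    have hcard : ν.support.card < k := by
      rw [← hk]; exact Finset.card_lt_card hssub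
    obtain ⟨n, r, x, y, hr, hxy, heq⟩ := ih _ hcard ν hνsum rfl
    refine ⟨n + 1, Fin.cons t r, Fin.cons a x, Fin.cons b y, ?_, ?_, ?_⟩
    · intro j
      refine Fin.cases ?_ ?_ j
      · simpa using htpos
      · intro i; simpa using hr i
    · intro j
      refine Fin.cases ?_ ?_ j
      · simpa using hab
      · intro i; simpa using hxy i
    · intro m
      rw [Fin.sum_univ_succ]
      simp only [Fin.cons_zero, Fin.cons_succ]
      rw [← heq m, hνapp m]
      split_ifs <;> ring

def molSet {M : Type*} (d : M → M → ℝ) (μ : M → ℝ) : Set ℝ :=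
  { c | ∃ (n : ℕ) (r : Fin n → ℝ) (x y : Fin n → M), IsMolRep μ r x y ∧ c = molCost d r x y }

lemma tcNorm_eq {M : Type*} (d : M → M → ℝ) (μ : M → ℝ) : tcNorm d μ = sInf (molSet d μ) := rfl

section MS
variable {M : Type*} [MetricSpace M]

lemma molSet_nonneg {μ : M → ℝ} : ∀ c ∈ molSet dist μ, (0:ℝ) ≤ c := by
  rintro c ⟨n, r, x, y, ⟨hr, -, -⟩, rfl⟩
  exact Finset.sum_nonneg fun j _ => mul_nonneg (hr j).le dist_nonneg

lemma molSet_bddBelow (μ : M → ℝ) : BddBelow (molSet dist μ) :=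
  ⟨0, fun c hc => molSet_nonneg c hc⟩

lemma tcNorm_nonneg {μ : M → ℝ} (hne : (molSet dist μ).Nonempty) : 0 ≤ tcNorm dist μ :=
  le_csInf hne molSet_nonneg

lemma zero_mem_molSet : (0:ℝ) ∈ molSet dist (⇑(0 : M →₀ ℝ)) :=
  ⟨0, Fin.elim0, Fin.elim0, Fin.elim0,
    ⟨fun j => j.elim0, fun j => j.elim0, fun m => by simp⟩, by simp [molCost]⟩

lemma tcNorm_zero : tcNorm dist (⇑(0 : M →₀ ℝ)) = 0 :=
  le_antisymm (csInf_le (molSet_bddBelow _) zero_mem_molSet)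
    (tcNorm_nonneg ⟨0, zero_mem_molSet⟩)

lemma tcNorm_le_dist (a b : M) :
    tcNorm dist ⇑(Finsupp.single a 1 - Finsupp.single b 1 : M →₀ ℝ) ≤ dist a b := by
  by_cases hab : a = b
  · subst hab
    simp only [sub_self, dist_self]
    exact le_of_eq tcNorm_zero
  · refine csInf_le (molSet_bddBelow _) ?_
    refine ⟨1, fun _ => 1, fun _ => a, fun _ => b, ⟨fun _ => one_pos, fun _ => hab, ?_⟩, ?_⟩
    · intro m
      simp [Finsupp.single_apply, Finsupp.sub_apply]
    · simp [molCost]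

lemma molSet_nonempty (μ : M →₀ ℝ) (hμ : (μ.sum fun _ v => v) = 0) :
    (molSet dist ⇑μ).Nonempty := by
  obtain ⟨n, r, x, y, h⟩ := exists_molRep μ hμ
  exact ⟨molCost dist r x y, n, r, x, y, h, rfl⟩

lemma tcNorm_add_le (p q : M →₀ ℝ) (hp : (p.sum fun _ v => v) = 0)
    (hq : (q.sum fun _ v => v) = 0) :
    tcNorm dist ⇑(p + q) ≤ tcNorm dist ⇑p + tcNorm dist ⇑q := by
  have hpq : ∀ cp ∈ molSet dist ⇑p, ∀ cq ∈ molSet dist ⇑q,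
      tcNorm dist ⇑(p + q) ≤ cp + cq := by
    rintro cp ⟨n, r, x, y, ⟨hr, hxy, heq⟩, rfl⟩ cq ⟨n', r', x', y', ⟨hr', hxy', heq'⟩, rfl⟩
    refine csInf_le (molSet_bddBelow _) ?_
    refine ⟨n + n', Fin.append r r', Fin.append x x', Fin.append y y', ⟨?_, ?_, ?_⟩, ?_⟩
    · refine Fin.addCases (fun i => ?_) (fun i => ?_)
      · simpa [Fin.append_left] using hr i
      · simpa [Fin.append_right] using hr' i
    · refine Fin.addCases (fun i => ?_) (fun i => ?_)
      · simpa [Fin.append_left] using hxy i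
      · simpa [Fin.append_right] using hxy' i
    · intro m
      rw [Finsupp.add_apply, heq m, heq' m, Fin.sum_univ_add]
      simp [Fin.append_left, Fin.append_right]
    · simp only [molCost]
      rw [Fin.sum_univ_add]
      simp [Fin.append_left, Fin.append_right]
  have h1 : tcNorm dist ⇑(p + q) - tcNorm dist ⇑q ≤ sInf (molSet dist ⇑p) := by
    refine le_csInf (molSet_nonempty p hp) fun cp hcp => ?_
    have h2 : tcNorm dist ⇑(p + q) - cp ≤ sInf (molSet dist ⇑q) := by
      refine le_csInf (molSet_nonempty q hq) fun cq hcq => ?_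
      linarith [hpq cp hcp cq hcq]
    have : tcNorm dist ⇑q = sInf (molSet dist ⇑q) := rfl
    linarith [h2, this]
  have : tcNorm dist ⇑p = sInf (molSet dist ⇑p) := rfl
  linarith

lemma smul_mem_molSet {c : ℝ} (hc : 0 < c) {μ : M → ℝ} {co : ℝ} (h : co ∈ molSet dist μ) :
    c * co ∈ molSet dist (c • μ) := by
  obtain ⟨n, r, x, y, ⟨hr, hxy, heq⟩, rfl⟩ := h
  refine ⟨n, c • r, x, y, ⟨fun j => mul_pos hc (hr j), hxy, fun m => ?_⟩, ?_⟩
  · simp only [Pi.smul_apply, smul_eq_mul, heq m, Finset.mul_sum]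
    exact Finset.sum_congr rfl fun j _ => by ring
  · simp only [molCost, Pi.smul_apply, smul_eq_mul, Finset.mul_sum]
    exact Finset.sum_congr rfl fun j _ => by ring

lemma tcNorm_smul_le (c : ℝ) (hc : 0 < c) (p : M →₀ ℝ) (hp : (p.sum fun _ v => v) = 0) :
    tcNorm dist ⇑(c • p) ≤ c * tcNorm dist ⇑p := by
  have key : ∀ co ∈ molSet dist ⇑p, tcNorm dist ⇑(c • p) ≤ c * co := fun co hco => by
    refine csInf_le (molSet_bddBelow _) ?_
    have := smul_mem_molSet hc hco
    rwa [← Finsupp.coe_smul] at this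
  have h2 : c⁻¹ * tcNorm dist ⇑(c • p) ≤ sInf (molSet dist ⇑p) :=
    le_csInf (molSet_nonempty p hp) fun co hco =>
      (inv_mul_le_iff₀ hc).2 (key co hco)
  have h3 := (inv_mul_le_iff₀ hc).1 h2
  exact h3

lemma tcNorm_smul (c : ℝ) (hc : 0 < c) (p : M →₀ ℝ) (hp : (p.sum fun _ v => v) = 0) :
    tcNorm dist ⇑(c • p) = c * tcNorm dist ⇑p := by
  refine le_antisymm (tcNorm_smul_le c hc p hp) ?_
  have hcp : ((c • p).sum fun _ v => v) = 0 := by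
    have : totalMass M (c • p) = 0 := by
      rw [map_smul, totalMass_apply, hp, smul_zero]
    rwa [totalMass_apply] at this
  have h := tcNorm_smul_le c⁻¹ (inv_pos.2 hc) (c • p) hcp
  rw [smul_smul, inv_mul_cancel₀ hc.ne', one_smul] at h
  calc c * tcNorm dist ⇑p ≤ c * (c⁻¹ * tcNorm dist ⇑(c • p)) :=
        mul_le_mul_of_nonneg_left h hc.le
    _ = tcNorm dist ⇑(c • p) := by field_simp


lemma sum_le_molCost (μ : M →₀ ℝ) {f : M → ℝ} (hf : LipschitzWith 1 f)
    {n : ℕ} {r : Fin n → ℝ} {x y : Fin n → M} (hrep : IsMolRep ⇑μ r x y) :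
    (μ.sum fun m v => v * f m) ≤ molCost dist r x y := by
  classical
  obtain ⟨hr, hxy, heq⟩ := hrep
  set T : Finset M := μ.support ∪ Finset.image x Finset.univ ∪ Finset.image y Finset.univ with hT
  have hsubT : μ.support ⊆ T :=
    subset_trans Finset.subset_union_left Finset.subset_union_left
  have hxT : ∀ j, x j ∈ T := fun j => by
    simp only [hT, Finset.mem_union, Finset.mem_image]
    exact Or.inl (Or.inr ⟨j, Finset.mem_univ j, rfl⟩)
  have hyT : ∀ j, y j ∈ T := fun j => by
    simp only [hT, Finset.mem_union, Finset.mem_image]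
    exact Or.inr ⟨j, Finset.mem_univ j, rfl⟩
  have hsum : (μ.sum fun m v => v * f m) = ∑ m ∈ T, μ m * f m :=
    Finsupp.sum_of_support_subset μ hsubT _ (fun m _ => by simp)
  have inner : ∀ j, ∑ m ∈ T, ((if x j = m then (1:ℝ) else 0) - if y j = m then 1 else 0) * f m
      = f (x j) - f (y j) := by
    intro j
    simp only [sub_mul, ite_mul, one_mul, zero_mul]
    rw [Finset.sum_sub_distrib, Finset.sum_ite_eq, Finset.sum_ite_eq,
      if_pos (hxT j), if_pos (hyT j)]
  have hmain : ∑ m ∈ T, μ m * f m = ∑ j, r j * (f (x j) - f (y j)) := by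
    calc ∑ m ∈ T, μ m * f m
        = ∑ m ∈ T, ∑ j, r j * (((if x j = m then (1:ℝ) else 0) - if y j = m then 1 else 0) * f m) := by
          refine Finset.sum_congr rfl fun m _ => ?_
          rw [heq m, Finset.sum_mul]
          exact Finset.sum_congr rfl fun j _ => by ring
      _ = ∑ j, ∑ m ∈ T, r j * (((if x j = m then (1:ℝ) else 0) - if y j = m then 1 else 0) * f m) :=
          Finset.sum_comm
      _ = ∑ j, r j * (f (x j) - f (y j)) := by
          refine Finset.sum_congr rfl fun j _ => ?_
          rw [← Finset.mul_sum, inner j]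
  rw [hsum, hmain]
  refine Finset.sum_le_sum fun j _ => ?_
  refine mul_le_mul_of_nonneg_left ?_ (hr j).le
  have := hf.dist_le_mul (x j) (y j)
  rw [NNReal.coe_one, one_mul, Real.dist_eq] at this
  calc f (x j) - f (y j) ≤ |f (x j) - f (y j)| := le_abs_self _
    _ ≤ dist (x j) (y j) := this

end MS

/-- **Duality Theorem of Kantorovich.** For a finitely supported `μ : M → ℝ` with total mass `0`,
the supremum of `∑ x, μ x * f x` over all `1`-Lipschitz `f : M → ℝ` equals the transportation
cost norm of `μ`. -/
theorem kantorovich_duality {M : Type*} [MetricSpace M] (μ : M →₀ ℝ)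
    (hμ : (μ.sum fun _ v => v) = 0) :
    sSup {s : ℝ | ∃ f : M → ℝ, LipschitzWith 1 f ∧ s = μ.sum fun x v => v * f x}
      = tcNorm dist ⇑μ := by
  classical
  set S := {s : ℝ | ∃ f : M → ℝ, LipschitzWith 1 f ∧ s = μ.sum fun x v => v * f x} with hS
  have hub : ∀ s ∈ S, s ≤ tcNorm dist ⇑μ := by
    rintro s ⟨f, hf, rfl⟩
    refine le_csInf (molSet_nonempty μ hμ) ?_
    rintro c ⟨n, r, x, y, hrep, rfl⟩
    exact sum_le_molCost μ hf hrep
  have hmem : tcNorm dist ⇑μ ∈ S := by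
    by_cases h0 : μ = 0
    · subst h0
      refine ⟨fun _ => 0, LipschitzWith.of_dist_le_mul (fun a b => by
        simpa using dist_nonneg), ?_⟩
      rw [tcNorm_zero]
      simp
    · obtain ⟨m₀, hm₀⟩ : μ.support.Nonempty := Finsupp.support_nonempty_iff.2 h0
      set V : Submodule ℝ (M →₀ ℝ) := LinearMap.ker (totalMass M) with hV
      have memV : ∀ p : M →₀ ℝ, (p.sum fun _ v => v) = 0 → p ∈ V := fun p hp => by
        show totalMass M p = 0
        rw [totalMass_apply]; exact hp
      have sumV : ∀ v : V, ((v : M →₀ ℝ).sum fun _ x => x) = 0 := fun v => by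
        have h : totalMass M (v : M →₀ ℝ) = 0 := v.2
        rwa [totalMass_apply] at h
      set μ' : V := ⟨μ, memV μ hμ⟩ with hμ'
      have hμ'ne : μ' ≠ 0 := by
        intro h
        exact h0 (by simpa [hμ', Subtype.ext_iff] using h)
      set N : V → ℝ := fun v => tcNorm dist ⇑(v : M →₀ ℝ) with hN
      have hN0 : ∀ v : V, 0 ≤ N v := fun v =>
        tcNorm_nonneg (molSet_nonempty (v : M →₀ ℝ) (sumV v))
      have hNhom : ∀ c : ℝ, 0 < c → ∀ v : V, N (c • v) = c * N v := by
        intro c hc v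
        show tcNorm dist ⇑((c • v : V) : M →₀ ℝ) = c * tcNorm dist ⇑(v : M →₀ ℝ)
        have hco : ((c • v : V) : M →₀ ℝ) = c • (v : M →₀ ℝ) := rfl
        rw [hco, tcNorm_smul c hc _ (sumV v)]
      have hNadd : ∀ v w : V, N (v + w) ≤ N v + N w := by
        intro v w
        show tcNorm dist ⇑((v + w : V) : M →₀ ℝ) ≤ _
        have hco : ((v + w : V) : M →₀ ℝ) = (v : M →₀ ℝ) + (w : M →₀ ℝ) := rfl
        rw [hco]
        exact tcNorm_add_le _ _ (sumV v) (sumV w)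
      set f₀ : V →ₗ.[ℝ] ℝ := LinearPMap.mkSpanSingleton μ' (tcNorm dist ⇑μ) hμ'ne with hf₀
      have hf₀le : ∀ z : f₀.domain, f₀ z ≤ N z := by
        rintro ⟨zv, hz⟩
        have hz' : zv ∈ Submodule.span ℝ {μ'} := hz
        obtain ⟨c, rfl⟩ := Submodule.mem_span_singleton.1 hz'
        have happ : f₀ ⟨c • μ', hz⟩ = c • tcNorm dist ⇑μ :=
          LinearPMap.mkSpanSingleton'_apply _ _ _ c hz
        rw [happ]
        rcases le_or_gt c 0 with hc | hc
        · have h1 : 0 ≤ tcNorm dist ⇑μ := tcNorm_nonneg (molSet_nonempty μ hμ)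
          have h2 : 0 ≤ N ((⟨c • μ', hz⟩ : f₀.domain) : V) := hN0 _
          have : c • tcNorm dist ⇑μ ≤ 0 := by
            rw [smul_eq_mul]
            exact mul_nonpos_iff.2 (Or.inr ⟨hc, h1⟩)
          linarith
        · show c • tcNorm dist ⇑μ ≤ N (c • μ')
          rw [hNhom c hc μ']
          have hNμ' : N μ' = tcNorm dist ⇑μ := rfl
          rw [hNμ', smul_eq_mul]
      obtain ⟨g, hg1, hg2⟩ := exists_extension_of_le_sublinear f₀ N hNhom hNadd hf₀le
      have hgμ : g μ' = tcNorm dist ⇑μ := by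
        have hmemd : μ' ∈ f₀.domain := Submodule.mem_span_singleton_self μ'
        have h1 := hg1 ⟨μ', hmemd⟩
        have h2 : f₀ ⟨μ', hmemd⟩ = tcNorm dist ⇑μ := LinearPMap.mkSpanSingleton_apply ℝ ℝ hμ'ne _
        rw [h1, h2]
      -- the dipole elements
      set D : M → M → V := fun a b =>
        ⟨Finsupp.single a 1 - Finsupp.single b 1, memV _ (by
          have : totalMass M (Finsupp.single a 1 - Finsupp.single b 1) = 0 := by
            rw [map_sub, totalMass_single, totalMass_single, sub_self]
          rwa [totalMass_apply] at this)⟩ with hD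
      set F : M → ℝ := fun m => g (D m m₀) with hF
      have hglediff : ∀ a b : M, g (D a b) ≤ dist a b := fun a b =>
        (hg2 (D a b)).trans (tcNorm_le_dist a b)
      have hDsub : ∀ a b : M, D a b = D a m₀ - D b m₀ := by
        intro a b
        apply Subtype.ext
        show (Finsupp.single a 1 - Finsupp.single b 1 : M →₀ ℝ)
          = (Finsupp.single a 1 - Finsupp.single m₀ 1) - (Finsupp.single b 1 - Finsupp.single m₀ 1)
        abel
      have hFlip : LipschitzWith 1 F := by
        refine LipschitzWith.of_dist_le_mul fun a b => ?_
        rw [NNReal.coe_one, one_mul, Real.dist_eq]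
        have e1 : F a - F b = g (D a b) :=
          calc F a - F b = g (D a m₀) - g (D b m₀) := rfl
            _ = g (D a m₀ - D b m₀) := (map_sub g _ _).symm
            _ = g (D a b) := by rw [← hDsub a b]
        have e2 : F b - F a = g (D b a) :=
          calc F b - F a = g (D b m₀) - g (D a m₀) := rfl
            _ = g (D b m₀ - D a m₀) := (map_sub g _ _).symm
            _ = g (D b a) := by rw [← hDsub b a]
        have h1 := hglediff a b
        have h2 := (hglediff b a).trans_eq (dist_comm b a)
        rw [abs_le]
        constructor <;> linarith [e1 ▸ h1, e2 ▸ h2]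
      refine ⟨F, hFlip, ?_⟩
      have key : (μ.sum fun x v => v • D x m₀) = μ' := by
        apply Subtype.ext
        have hcoe : ((μ.sum fun x v => v • D x m₀ : V) : M →₀ ℝ)
            = μ.sum fun x v => v • ((D x m₀ : M →₀ ℝ)) := by
          rw [Finsupp.sum, Finsupp.sum, AddSubmonoidClass.coe_finset_sum]
          simp
        rw [hcoe]
        show (μ.sum fun x v => v • (Finsupp.single x 1 - Finsupp.single m₀ 1)) = μ
        have : ∀ (x : M) (v : ℝ), v • (Finsupp.single x (1:ℝ) - Finsupp.single m₀ 1)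
            = Finsupp.single x v - Finsupp.single m₀ v := by
          intro x v
          simp [smul_sub, Finsupp.smul_single]
        rw [Finsupp.sum_congr (g2 := fun x v => Finsupp.single x v - Finsupp.single m₀ v)
          (fun x _ => this x (μ x))]
        rw [Finsupp.sum_sub]
        rw [Finsupp.sum_single]
        have : (μ.sum fun x v => Finsupp.single m₀ v) = Finsupp.single m₀ (μ.sum fun _ v => v) :=
          (Finsupp.single_sum μ (fun _ v => v) m₀).symm
        rw [this, hμ, Finsupp.single_zero, sub_zero]
      have hsum : (μ.sum fun x v => v * F x) = g μ' := by
        rw [← key, map_finsuppSum]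
        refine Finsupp.sum_congr fun x _ => ?_
        rw [map_smul, smul_eq_mul, hF]
      rw [hsum, hgμ]
  exact le_antisymm (csSup_le ⟨_, hmem⟩ hub) (le_csSup ⟨_, hub⟩ hmem)
end

section
/- Let (M,d) be a metric space and μ ∈ F̃(M). For every molecular representation μ = Σ_{j=1}^n r_j (δ_{x_j} − δ_{y_j}) there exists a molecular representation μ = Σ_{j=1}^{n'} r'_j (δ_{x'_j} − δ_{y'_j}) such that the sets {x'_1,…,x'_{n'}} and {y'_1,…,y'_{n'}} are disjoint and whose transportation cost Σ_{j=1}^{n'} r'_j d(x'_j,y'_j) is at most Σ_{j=1}^n r_j d(x_j,y_j). -/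
open scoped BigOperators Classical

namespace DisjRepAux

variable {M : Type*} [MetricSpace M]

/-- Relaxed representation: nonnegative coefficients, no distinctness requirement. -/
def Rep (μ : M → ℝ) {ι : Type} [Fintype ι] (r : ι → ℝ) (x y : ι → M) : Prop :=
  (∀ j, 0 ≤ r j) ∧
    ∀ m, μ m = ∑ j, r j * ((if x j = m then (1 : ℝ) else 0) - (if y j = m then (1 : ℝ) else 0))

noncomputable def cost {ι : Type} [Fintype ι] (r : ι → ℝ) (x y : ι → M) : ℝ :=
  ∑ j, r j * dist (x j) (y j)

/-- The active indices of a relaxed representation. -/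
noncomputable def act {ι : Type} [Fintype ι] (r : ι → ℝ) (x y : ι → M) : Finset ι :=
  Finset.univ.filter fun j => 0 < r j ∧ x j ≠ y j

noncomputable def srcs {ι : Type} [Fintype ι] (r : ι → ℝ) (x y : ι → M) : Finset M :=
  (act r x y).image x

noncomputable def snks {ι : Type} [Fintype ι] (r : ι → ℝ) (x y : ι → M) : Finset M :=
  (act r x y).image y

/-- The conclusion we are after. -/
def Concl (μ : M → ℝ) (C : ℝ) : Prop :=
  ∃ (n' : ℕ) (r' : Fin n' → ℝ) (x' y' : Fin n' → M),
    IsMolRep μ r' x' y' ∧ Disjoint (Set.range x') (Set.range y') ∧ molCost dist r' x' y' ≤ C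

omit [MetricSpace M] in
lemma act_swap {ι : Type} [Fintype ι] (r : ι → ℝ) (x y : ι → M) :
    act r y x = act r x y := by
  unfold act
  apply Finset.filter_congr
  intro j _
  constructor
  · rintro ⟨h1, h2⟩; exact ⟨h1, h2.symm⟩
  · rintro ⟨h1, h2⟩; exact ⟨h1, h2.symm⟩

lemma cost_swap {ι : Type} [Fintype ι] (r : ι → ℝ) (x y : ι → M) :
    cost r y x = cost r x y := by
  unfold cost
  exact Finset.sum_congr rfl fun j _ => by rw [dist_comm]

omit [MetricSpace M] in
lemma rep_swap {μ : M → ℝ} {ι : Type} [Fintype ι] {r : ι → ℝ} {x y : ι → M}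
    (h : Rep μ r x y) : Rep (fun m => -μ m) r y x := by
  refine ⟨h.1, fun m => ?_⟩
  show -μ m = _
  rw [h.2 m, ← Finset.sum_neg_distrib]
  exact Finset.sum_congr rfl fun j _ => by ring

/-- Base case: the active sources and sinks are already disjoint. -/
lemma base (μ : M → ℝ) {ι : Type} [Fintype ι] (r : ι → ℝ) (x y : ι → M)
    (h : Rep μ r x y) (hd : srcs r x y ∩ snks r x y = ∅) : Concl μ (cost r x y) := by
  classical
  set s : Finset ι := act r x y with hs
  let e := s.equivFin
  refine ⟨s.card, fun k => r ((e.symm k : s) : ι), fun k => x ((e.symm k : s) : ι),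
    fun k => y ((e.symm k : s) : ι), ⟨?_, ?_, ?_⟩, ?_, ?_⟩
  · intro k
    have := (e.symm k).2
    simp only [hs, act, Finset.mem_filter] at this
    exact this.2.1
  · intro k
    have := (e.symm k).2
    simp only [hs, act, Finset.mem_filter] at this
    exact this.2.2
  · intro m
    rw [h.2 m]
    have h1 : ∑ j, r j * ((if x j = m then (1 : ℝ) else 0) - (if y j = m then (1 : ℝ) else 0))
        = ∑ j ∈ s, r j * ((if x j = m then (1 : ℝ) else 0) - (if y j = m then (1 : ℝ) else 0)) := by
      refine (Finset.sum_subset (Finset.subset_univ s) ?_).symm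
      intro j _ hj
      rw [hs, act, Finset.mem_filter] at hj
      push_neg at hj
      rcases lt_or_eq_of_le (h.1 j) with hr | hr
      · have hxy := hj (Finset.mem_univ j) hr
        simp [hxy]
      · rw [← hr]; ring
    rw [h1, ← Finset.sum_coe_sort s (fun j => r j * ((if x j = m then (1 : ℝ) else 0) -
      (if y j = m then (1 : ℝ) else 0)))]
    exact (Equiv.sum_comp e.symm fun a : s => r (a : ι) * ((if x (a : ι) = m then (1 : ℝ) else 0) -
      (if y (a : ι) = m then (1 : ℝ) else 0))).symm
  · rw [Set.disjoint_left]
    rintro a ⟨k, rfl⟩ ⟨k', hk'⟩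
    simp only at hk'
    have ha1 : x ((e.symm k : s) : ι) ∈ srcs r x y :=
      Finset.mem_image_of_mem x (e.symm k).2
    have ha2 : x ((e.symm k : s) : ι) ∈ snks r x y := by
      rw [← hk']; exact Finset.mem_image_of_mem y (e.symm k').2
    have : x ((e.symm k : s) : ι) ∈ srcs r x y ∩ snks r x y := Finset.mem_inter.mpr ⟨ha1, ha2⟩
    rw [hd] at this
    exact absurd this (Finset.notMem_empty _)
  · unfold molCost cost
    rw [show (∑ k : Fin s.card, r ((e.symm k : s) : ι) *
        dist (x ((e.symm k : s) : ι)) (y ((e.symm k : s) : ι)))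
        = ∑ j ∈ s, r j * dist (x j) (y j) by
      rw [← Finset.sum_coe_sort s (fun j => r j * dist (x j) (y j))]
      exact Equiv.sum_comp e.symm fun a : s => r (a : ι) * dist (x (a : ι)) (y (a : ι))]
    apply Finset.sum_le_sum_of_subset_of_nonneg (Finset.subset_univ s)
    intro j _ _
    exact mul_nonneg (h.1 j) dist_nonneg


omit [MetricSpace M] in
/-- Summation of the new family built from a proportional coupling. -/
lemma sum_elim_form {ι : Type} [Fintype ι] (I J : Finset ι) (A B : ℝ) (r : ι → ℝ)
    (g : ι → ι → ℝ) (hIJ : ∀ k, k ∈ I → k ∈ J → False) :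
    ∑ t : (ι × ι) ⊕ ι,
      (Sum.elim (fun ij => if ij.1 ∈ I ∧ ij.2 ∈ J then r ij.1 * r ij.2 / B else 0)
        (fun k => if k ∈ J then r k * (1 - A / B) else if k ∈ I then 0 else r k) t) *
      (Sum.elim (fun ij => g ij.1 ij.2) (fun k => g k k) t)
    = (∑ i ∈ I, ∑ j ∈ J, (r i * r j / B) * g i j)
      + (∑ k : ι, r k * g k k - ∑ i ∈ I, r i * g i i - (A / B) * ∑ j ∈ J, r j * g j j) := by
  classical
  rw [Fintype.sum_sum_type]
  congr 1
  · -- the product part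
    simp only [Sum.elim_inl]
    rw [Fintype.sum_prod_type]
    calc ∑ i : ι, ∑ j : ι, (if i ∈ I ∧ j ∈ J then r i * r j / B else 0) * g i j
        = ∑ i : ι, (if i ∈ I then ∑ j : ι,
            (if j ∈ J then (r i * r j / B) * g i j else 0) else 0) := by
          apply Finset.sum_congr rfl; intro i _
          by_cases hi : i ∈ I
          · rw [if_pos hi]
            apply Finset.sum_congr rfl; intro j _
            by_cases hj : j ∈ J <;> simp [hi, hj]
          · rw [if_neg hi]
            apply Finset.sum_eq_zero; intro j _
            simp [hi]
      _ = ∑ i ∈ I, ∑ j ∈ J, (r i * r j / B) * g i j := by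
          rw [Finset.sum_ite_mem, Finset.univ_inter]
          apply Finset.sum_congr rfl; intro i _
          rw [Finset.sum_ite_mem, Finset.univ_inter]
  · -- the leftover part
    simp only [Sum.elim_inr]
    have hr2 : ∀ k, (if k ∈ J then r k * (1 - A / B) else if k ∈ I then 0 else r k) * g k k
        = r k * g k k - (if k ∈ I then r k * g k k else 0)
          - (if k ∈ J then (A / B) * (r k * g k k) else 0) := by
      intro k
      by_cases hk : k ∈ J
      · have hk' : k ∉ I := fun h' => hIJ k h' hk
        simp only [if_pos hk, if_neg hk']
        ring
      · by_cases hk' : k ∈ I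
        · simp only [if_neg hk, if_pos hk']
          ring
        · simp only [if_neg hk, if_neg hk']
          ring
    calc ∑ k : ι, (if k ∈ J then r k * (1 - A / B) else if k ∈ I then 0 else r k) * g k k
        = ∑ k : ι, (r k * g k k - (if k ∈ I then r k * g k k else 0)
            - (if k ∈ J then (A / B) * (r k * g k k) else 0)) := by
          exact Finset.sum_congr rfl fun k _ => hr2 k
      _ = _ := by
          rw [Finset.sum_sub_distrib, Finset.sum_sub_distrib, Finset.sum_ite_mem,
            Finset.univ_inter, Finset.sum_ite_mem, Finset.univ_inter, ← Finset.mul_sum]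

/-- One cancellation step at a point `p` that is both a source and a sink, assuming the
total outgoing mass `A` at `p` is at most the total incoming mass `B`. -/
lemma step (μ : M → ℝ) {ι : Type} [Fintype ι] (r : ι → ℝ) (x y : ι → M)
    (h : Rep μ r x y) (p : M) (hps : p ∈ srcs r x y) (hpt : p ∈ snks r x y)
    (hab : ∑ i ∈ (act r x y).filter (fun i => x i = p), r i
         ≤ ∑ j ∈ (act r x y).filter (fun j => y j = p), r j) :
    ∃ (r'' : (ι × ι) ⊕ ι → ℝ) (x'' y'' : (ι × ι) ⊕ ι → M),
      Rep μ r'' x'' y'' ∧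
      srcs r'' x'' y'' ∩ snks r'' x'' y'' ⊆ (srcs r x y ∩ snks r x y).erase p ∧
      cost r'' x'' y'' ≤ cost r x y := by
  classical
  set I := (act r x y).filter (fun i => x i = p) with hIdef
  set J := (act r x y).filter (fun j => y j = p) with hJdef
  set A := ∑ i ∈ I, r i with hAdef
  set B := ∑ j ∈ J, r j with hBdef
  have memI : ∀ i, i ∈ I ↔ (0 < r i ∧ x i ≠ y i) ∧ x i = p := by
    intro i
    rw [hIdef, Finset.mem_filter, act, Finset.mem_filter]
    simp [Finset.mem_univ]
  have memJ : ∀ j, j ∈ J ↔ (0 < r j ∧ x j ≠ y j) ∧ y j = p := by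
    intro j
    rw [hJdef, Finset.mem_filter, act, Finset.mem_filter]
    simp [Finset.mem_univ]
  have memact : ∀ k, k ∈ act r x y ↔ 0 < r k ∧ x k ≠ y k := by
    intro k; rw [act, Finset.mem_filter]; simp [Finset.mem_univ]
  have hI_ne : I.Nonempty := by
    obtain ⟨i, hi, hxi⟩ := Finset.mem_image.mp hps
    exact ⟨i, (memI i).mpr ⟨(memact i).mp hi, hxi⟩⟩
  have hJ_ne : J.Nonempty := by
    obtain ⟨j, hj, hyj⟩ := Finset.mem_image.mp hpt
    exact ⟨j, (memJ j).mpr ⟨(memact j).mp hj, hyj⟩⟩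
  have hApos : 0 < A := Finset.sum_pos (fun i hi => ((memI i).mp hi).1.1) hI_ne
  have hBpos : 0 < B := Finset.sum_pos (fun j hj => ((memJ j).mp hj).1.1) hJ_ne
  have hBne : B ≠ 0 := ne_of_gt hBpos
  have hIJ : ∀ k, k ∈ I → k ∈ J → False := by
    intro k hkI hkJ
    have h1 := (memI k).mp hkI
    have h2 := (memJ k).mp hkJ
    exact h1.1.2 (h1.2.trans h2.2.symm)
  set r'' : (ι × ι) ⊕ ι → ℝ :=
    Sum.elim (fun ij => if ij.1 ∈ I ∧ ij.2 ∈ J then r ij.1 * r ij.2 / B else 0)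
      (fun k => if k ∈ J then r k * (1 - A / B) else if k ∈ I then 0 else r k) with hr''
  set x'' : (ι × ι) ⊕ ι → M := Sum.elim (fun ij => x ij.2) x with hx''
  set y'' : (ι × ι) ⊕ ι → M := Sum.elim (fun ij => y ij.1) y with hy''
  -- collapsing the double sums
  have collapseJ : ∀ f : ι → ℝ,
      ∑ i ∈ I, ∑ j ∈ J, (r i * r j / B) * f j = A * ((∑ j ∈ J, r j * f j) / B) := by
    intro f
    calc ∑ i ∈ I, ∑ j ∈ J, (r i * r j / B) * f j
        = ∑ i ∈ I, r i * ((∑ j ∈ J, r j * f j) / B) := by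
          apply Finset.sum_congr rfl; intro i _
          rw [Finset.sum_div, Finset.mul_sum]
          apply Finset.sum_congr rfl; intro j _; ring
      _ = A * ((∑ j ∈ J, r j * f j) / B) := by rw [hAdef, Finset.sum_mul]
  have collapseI : ∀ f : ι → ℝ,
      ∑ i ∈ I, ∑ j ∈ J, (r i * r j / B) * f i = ∑ i ∈ I, r i * f i := by
    intro f
    calc ∑ i ∈ I, ∑ j ∈ J, (r i * r j / B) * f i
        = ∑ i ∈ I, (r i * f i) * (B / B) := by
          apply Finset.sum_congr rfl; intro i _
          rw [hBdef, Finset.sum_div, Finset.mul_sum]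
          apply Finset.sum_congr rfl; intro j _; ring
      _ = ∑ i ∈ I, r i * f i := by
          rw [div_self hBne]
          exact Finset.sum_congr rfl fun i _ => mul_one _
  refine ⟨r'', x'', y'', ⟨?_, ?_⟩, ?_, ?_⟩
  · -- nonnegativity
    rintro (⟨i, j⟩ | k)
    · simp only [hr'', Sum.elim_inl]
      split_ifs with hc
      · exact div_nonneg (mul_nonneg (h.1 i) (h.1 j)) (le_of_lt hBpos)
      · exact le_refl 0
    · simp only [hr'', Sum.elim_inr]
      split_ifs with hc hc'
      · apply mul_nonneg (h.1 k)
        rw [sub_nonneg, div_le_one hBpos]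
        exact hab
      · exact le_refl 0
      · exact h.1 k
  · -- measure identity
    intro m
    have hg : ∀ t, ((if x'' t = m then (1 : ℝ) else 0) - (if y'' t = m then (1 : ℝ) else 0))
        = Sum.elim
            (fun ij : ι × ι => ((if x ij.2 = m then (1 : ℝ) else 0) -
              (if y ij.1 = m then (1 : ℝ) else 0)))
            (fun k => ((if x k = m then (1 : ℝ) else 0) - (if y k = m then (1 : ℝ) else 0))) t := by
      rintro (⟨i, j⟩ | k) <;> rfl
    have step1 : ∑ t, r'' t * ((if x'' t = m then (1 : ℝ) else 0) -
          (if y'' t = m then (1 : ℝ) else 0))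
        = (∑ i ∈ I, ∑ j ∈ J, (r i * r j / B) *
            ((if x j = m then (1 : ℝ) else 0) - (if y i = m then (1 : ℝ) else 0)))
          + ((∑ k : ι, r k * ((if x k = m then (1 : ℝ) else 0) - (if y k = m then (1 : ℝ) else 0)))
            - (∑ i ∈ I, r i * ((if x i = m then (1 : ℝ) else 0) - (if y i = m then (1 : ℝ) else 0)))
            - (A / B) * ∑ j ∈ J, r j * ((if x j = m then (1 : ℝ) else 0) -
                (if y j = m then (1 : ℝ) else 0))) := by
      calc ∑ t, r'' t * ((if x'' t = m then (1 : ℝ) else 0) - (if y'' t = m then (1 : ℝ) else 0))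
          = ∑ t, r'' t * (Sum.elim
              (fun ij : ι × ι => ((if x ij.2 = m then (1 : ℝ) else 0) -
                (if y ij.1 = m then (1 : ℝ) else 0)))
              (fun k => ((if x k = m then (1 : ℝ) else 0) -
                (if y k = m then (1 : ℝ) else 0))) t) :=
            Finset.sum_congr rfl fun t _ => by rw [hg t]
        _ = _ := by
            rw [hr'']
            exact sum_elim_form I J A B r
              (fun i j => ((if x j = m then (1 : ℝ) else 0) -
                (if y i = m then (1 : ℝ) else 0))) hIJ
    have e1 : ∑ i ∈ I, ∑ j ∈ J,
        (r i * r j / B) * ((if x j = m then (1 : ℝ) else 0) - (if y i = m then (1 : ℝ) else 0))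
        = A * ((∑ j ∈ J, r j * (if x j = m then (1 : ℝ) else 0)) / B)
          - ∑ i ∈ I, r i * (if y i = m then (1 : ℝ) else 0) := by
      calc ∑ i ∈ I, ∑ j ∈ J,
          (r i * r j / B) * ((if x j = m then (1 : ℝ) else 0) - (if y i = m then (1 : ℝ) else 0))
          = ∑ i ∈ I, ∑ j ∈ J, ((r i * r j / B) * (if x j = m then (1 : ℝ) else 0)
              - (r i * r j / B) * (if y i = m then (1 : ℝ) else 0)) := by
            exact Finset.sum_congr rfl fun i _ => Finset.sum_congr rfl fun j _ => by ring
        _ = ∑ i ∈ I, ((∑ j ∈ J, (r i * r j / B) * (if x j = m then (1 : ℝ) else 0))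
              - ∑ j ∈ J, (r i * r j / B) * (if y i = m then (1 : ℝ) else 0)) :=
            Finset.sum_congr rfl fun i _ => Finset.sum_sub_distrib _ _
        _ = (∑ i ∈ I, ∑ j ∈ J, (r i * r j / B) * (if x j = m then (1 : ℝ) else 0))
              - ∑ i ∈ I, ∑ j ∈ J, (r i * r j / B) * (if y i = m then (1 : ℝ) else 0) :=
            Finset.sum_sub_distrib _ _
        _ = _ := by
            rw [collapseJ (fun j => (if x j = m then (1 : ℝ) else 0)),
              collapseI (fun i => (if y i = m then (1 : ℝ) else 0))]
    have e2 : ∑ i ∈ I, r i * ((if x i = m then (1 : ℝ) else 0) - (if y i = m then (1 : ℝ) else 0))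
        = A * (if p = m then (1 : ℝ) else 0)
          - ∑ i ∈ I, r i * (if y i = m then (1 : ℝ) else 0) := by
      calc ∑ i ∈ I, r i * ((if x i = m then (1 : ℝ) else 0) - (if y i = m then (1 : ℝ) else 0))
          = ∑ i ∈ I, (r i * (if p = m then (1 : ℝ) else 0)
              - r i * (if y i = m then (1 : ℝ) else 0)) := by
            refine Finset.sum_congr rfl fun i hi => ?_
            rw [((memI i).mp hi).2]
            ring
        _ = (∑ i ∈ I, r i * (if p = m then (1 : ℝ) else 0))
              - ∑ i ∈ I, r i * (if y i = m then (1 : ℝ) else 0) := Finset.sum_sub_distrib _ _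
        _ = _ := by rw [← Finset.sum_mul]
    have e3 : ∑ j ∈ J, r j * ((if x j = m then (1 : ℝ) else 0) - (if y j = m then (1 : ℝ) else 0))
        = (∑ j ∈ J, r j * (if x j = m then (1 : ℝ) else 0))
          - B * (if p = m then (1 : ℝ) else 0) := by
      calc ∑ j ∈ J, r j * ((if x j = m then (1 : ℝ) else 0) - (if y j = m then (1 : ℝ) else 0))
          = ∑ j ∈ J, (r j * (if x j = m then (1 : ℝ) else 0)
              - r j * (if p = m then (1 : ℝ) else 0)) := by
            refine Finset.sum_congr rfl fun j hj => ?_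
            rw [((memJ j).mp hj).2]
            ring
        _ = (∑ j ∈ J, r j * (if x j = m then (1 : ℝ) else 0))
              - ∑ j ∈ J, r j * (if p = m then (1 : ℝ) else 0) := Finset.sum_sub_distrib _ _
        _ = _ := by rw [← Finset.sum_mul]
    rw [h.2 m, step1, e1, e2, e3]
    have hdiv : A / B * B = A := div_mul_cancel₀ A hBne
    linear_combination (-(if p = m then (1 : ℝ) else 0)) * hdiv
  · -- sources/sinks shrink and avoid p
    intro q hq
    rw [Finset.mem_inter] at hq
    obtain ⟨hq1, hq2⟩ := hq
    have memact'' : ∀ t, t ∈ act r'' x'' y'' ↔ 0 < r'' t ∧ x'' t ≠ y'' t := by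
      intro t; rw [act, Finset.mem_filter]; simp [Finset.mem_univ]
    have hposI : ∀ i j, 0 < r'' (Sum.inl (i, j)) → i ∈ I ∧ j ∈ J := by
      intro i j hpos
      by_contra hc
      rw [hr''] at hpos
      simp only [Sum.elim_inl] at hpos
      rw [if_neg hc] at hpos
      exact lt_irrefl 0 hpos
    have hsrc : ∀ t ∈ act r'' x'' y'', x'' t ∈ srcs r x y ∧ x'' t ≠ p := by
      rintro (⟨i, j⟩ | k) ht
      · obtain ⟨hpos, hne⟩ := (memact'' _).mp ht
        obtain ⟨hi, hj⟩ := hposI i j hpos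
        have hj' := (memJ j).mp hj
        refine ⟨Finset.mem_image_of_mem x ((memact j).mpr hj'.1), ?_⟩
        show x j ≠ p
        rw [← hj'.2]; exact hj'.1.2
      · obtain ⟨hpos, hne⟩ := (memact'' _).mp ht
        rw [hr''] at hpos
        simp only [Sum.elim_inr] at hpos
        by_cases hk : k ∈ J
        · have hk' := (memJ k).mp hk
          refine ⟨Finset.mem_image_of_mem x ((memact k).mpr hk'.1), ?_⟩
          show x k ≠ p
          rw [← hk'.2]; exact hk'.1.2
        · rw [if_neg hk] at hpos
          by_cases hk' : k ∈ I
          · rw [if_pos hk'] at hpos; exact absurd hpos (lt_irrefl 0)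
          · rw [if_neg hk'] at hpos
            have hne' : x k ≠ y k := hne
            have hkact : k ∈ act r x y := (memact k).mpr ⟨hpos, hne'⟩
            refine ⟨Finset.mem_image_of_mem x hkact, ?_⟩
            show x k ≠ p
            intro hxp
            exact hk' ((memI k).mpr ⟨⟨hpos, hne'⟩, hxp⟩)
    have hsnk : ∀ t ∈ act r'' x'' y'', y'' t ∈ snks r x y := by
      rintro (⟨i, j⟩ | k) ht
      · obtain ⟨hpos, hne⟩ := (memact'' _).mp ht
        obtain ⟨hi, hj⟩ := hposI i j hpos
        exact Finset.mem_image_of_mem y ((memact i).mpr ((memI i).mp hi).1)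
      · obtain ⟨hpos, hne⟩ := (memact'' _).mp ht
        rw [hr''] at hpos
        simp only [Sum.elim_inr] at hpos
        by_cases hk : k ∈ J
        · exact Finset.mem_image_of_mem y ((memact k).mpr ((memJ k).mp hk).1)
        · rw [if_neg hk] at hpos
          by_cases hk' : k ∈ I
          · rw [if_pos hk'] at hpos; exact absurd hpos (lt_irrefl 0)
          · rw [if_neg hk'] at hpos
            have hne' : x k ≠ y k := hne
            exact Finset.mem_image_of_mem y ((memact k).mpr ⟨hpos, hne'⟩)
    obtain ⟨t, htact, hxt⟩ := Finset.mem_image.mp hq1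
    obtain ⟨t', ht'act, hyt'⟩ := Finset.mem_image.mp hq2
    refine Finset.mem_erase.mpr ⟨?_, Finset.mem_inter.mpr ⟨?_, ?_⟩⟩
    · rw [← hxt]; exact (hsrc t htact).2
    · rw [← hxt]; exact (hsrc t htact).1
    · rw [← hyt']; exact hsnk t' ht'act
  · -- cost bound
    have hg : ∀ t, dist (x'' t) (y'' t)
        = Sum.elim (fun ij : ι × ι => dist (x ij.2) (y ij.1)) (fun k => dist (x k) (y k)) t := by
      rintro (⟨i, j⟩ | k) <;> rfl
    have step1 : cost r'' x'' y''
        = (∑ i ∈ I, ∑ j ∈ J, (r i * r j / B) * dist (x j) (y i))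
          + ((∑ k : ι, r k * dist (x k) (y k))
            - (∑ i ∈ I, r i * dist (x i) (y i))
            - (A / B) * ∑ j ∈ J, r j * dist (x j) (y j)) := by
      calc cost r'' x'' y''
          = ∑ t, r'' t * (Sum.elim (fun ij : ι × ι => dist (x ij.2) (y ij.1))
              (fun k => dist (x k) (y k)) t) := by
            unfold cost
            exact Finset.sum_congr rfl fun t _ => by rw [hg t]
        _ = _ := by
            rw [hr'']
            exact sum_elim_form I J A B r (fun i j => dist (x j) (y i)) hIJ
    have tri : ∑ i ∈ I, ∑ j ∈ J, (r i * r j / B) * dist (x j) (y i)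
        ≤ (∑ i ∈ I, ∑ j ∈ J, (r i * r j / B) * dist (x j) (y j))
          + ∑ i ∈ I, ∑ j ∈ J, (r i * r j / B) * dist (x i) (y i) := by
      rw [← Finset.sum_add_distrib]
      apply Finset.sum_le_sum; intro i hi
      rw [← Finset.sum_add_distrib]
      apply Finset.sum_le_sum; intro j hj
      have hc : 0 ≤ r i * r j / B := div_nonneg (mul_nonneg (h.1 i) (h.1 j)) (le_of_lt hBpos)
      have hd : dist (x j) (y i) ≤ dist (x j) (y j) + dist (x i) (y i) := by
        have h1 := ((memJ j).mp hj).2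
        have h2 := ((memI i).mp hi).2
        calc dist (x j) (y i) ≤ dist (x j) p + dist p (y i) := dist_triangle _ _ _
          _ = dist (x j) (y j) + dist (x i) (y i) := by rw [h1, h2]
      calc (r i * r j / B) * dist (x j) (y i)
          ≤ (r i * r j / B) * (dist (x j) (y j) + dist (x i) (y i)) :=
            mul_le_mul_of_nonneg_left hd hc
        _ = (r i * r j / B) * dist (x j) (y j) + (r i * r j / B) * dist (x i) (y i) := by ring
    rw [step1]
    have final : ((∑ i ∈ I, ∑ j ∈ J, (r i * r j / B) * dist (x j) (y j))
          + ∑ i ∈ I, ∑ j ∈ J, (r i * r j / B) * dist (x i) (y i))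
          + ((∑ k : ι, r k * dist (x k) (y k)) - (∑ i ∈ I, r i * dist (x i) (y i))
            - (A / B) * ∑ j ∈ J, r j * dist (x j) (y j))
        = ∑ k : ι, r k * dist (x k) (y k) := by
      rw [collapseJ (fun j => dist (x j) (y j)), collapseI (fun i => dist (x i) (y i))]
      have hdiv : A / B * B = A := div_mul_cancel₀ A hBne
      ring
    calc (∑ i ∈ I, ∑ j ∈ J, (r i * r j / B) * dist (x j) (y i))
          + ((∑ k : ι, r k * dist (x k) (y k)) - (∑ i ∈ I, r i * dist (x i) (y i))
            - (A / B) * ∑ j ∈ J, r j * dist (x j) (y j))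
        ≤ ((∑ i ∈ I, ∑ j ∈ J, (r i * r j / B) * dist (x j) (y j))
            + ∑ i ∈ I, ∑ j ∈ J, (r i * r j / B) * dist (x i) (y i))
          + ((∑ k : ι, r k * dist (x k) (y k)) - (∑ i ∈ I, r i * dist (x i) (y i))
            - (A / B) * ∑ j ∈ J, r j * dist (x j) (y j)) := add_le_add_left tri _
      _ = ∑ k : ι, r k * dist (x k) (y k) := final
      _ = cost r x y := rfl

omit [MetricSpace M] in
lemma srcs_swap {ι : Type} [Fintype ι] (r : ι → ℝ) (x y : ι → M) :
    srcs r y x = snks r x y := by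
  unfold srcs snks; rw [act_swap]

omit [MetricSpace M] in
lemma snks_swap {ι : Type} [Fintype ι] (r : ι → ℝ) (x y : ι → M) :
    snks r y x = srcs r x y := by
  unfold srcs snks; rw [act_swap]

lemma concl_swap {μ : M → ℝ} {C : ℝ} (h : Concl (fun m => -μ m) C) : Concl μ C := by
  obtain ⟨n', r', x', y', ⟨h1, h2, h3⟩, hd, hc⟩ := h
  refine ⟨n', r', y', x', ⟨h1, fun j => (h2 j).symm, fun m => ?_⟩, hd.symm, ?_⟩
  · have h4 : -μ m = ∑ j, r' j * ((if x' j = m then (1 : ℝ) else 0) -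
        (if y' j = m then (1 : ℝ) else 0)) := h3 m
    have h5 : μ m = -∑ j, r' j * ((if x' j = m then (1 : ℝ) else 0) -
        (if y' j = m then (1 : ℝ) else 0)) := by linarith
    rw [h5, ← Finset.sum_neg_distrib]
    exact Finset.sum_congr rfl fun j _ => by ring
  · have he : molCost dist r' y' x' = molCost dist r' x' y' := by
      unfold molCost
      exact Finset.sum_congr rfl fun j _ => by rw [dist_comm]
    rw [he]
    exact hc

lemma main (N : ℕ) : ∀ (μ : M → ℝ) (ι : Type) [Fintype ι] (r : ι → ℝ) (x y : ι → M),
    Rep μ r x y → (srcs r x y ∩ snks r x y).card ≤ N → Concl μ (cost r x y) := by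
  induction N with
  | zero =>
    intro μ ι _ r x y h hcard
    exact base μ r x y h (Finset.card_eq_zero.mp (Nat.le_zero.mp hcard))
  | succ N ih =>
    intro μ ι _ r x y h hcard
    by_cases hd : srcs r x y ∩ snks r x y = ∅
    · exact base μ r x y h hd
    · obtain ⟨p, hp⟩ := Finset.nonempty_of_ne_empty hd
      obtain ⟨hps, hpt⟩ := Finset.mem_inter.mp hp
      by_cases hab : ∑ i ∈ (act r x y).filter (fun i => x i = p), r i
          ≤ ∑ j ∈ (act r x y).filter (fun j => y j = p), r j
      · obtain ⟨r'', x'', y'', h'', hsub, hc⟩ := step μ r x y h p hps hpt hab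
        have hcard'' : (srcs r'' x'' y'' ∩ snks r'' x'' y'').card ≤ N := by
          have h1 := Finset.card_le_card hsub
          have h2 := Finset.card_erase_lt_of_mem hp
          omega
        obtain ⟨n', r', x', y', hrep, hdisj, hcost⟩ := ih μ _ r'' x'' y'' h'' hcard''
        exact ⟨n', r', x', y', hrep, hdisj, le_trans hcost hc⟩
      · have h' := rep_swap h
        have hps' : p ∈ srcs r y x := by rw [srcs_swap]; exact hpt
        have hpt' : p ∈ snks r y x := by rw [snks_swap]; exact hps
        have hab' : ∑ i ∈ (act r y x).filter (fun i => y i = p), r i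
            ≤ ∑ j ∈ (act r y x).filter (fun j => x j = p), r j := by
          rw [act_swap]
          exact le_of_lt (lt_of_not_ge hab)
        obtain ⟨r'', x'', y'', h'', hsub, hc⟩ := step (fun m => -μ m) r y x h' p hps' hpt' hab'
        have hsub' : srcs r'' x'' y'' ∩ snks r'' x'' y'' ⊆ (srcs r x y ∩ snks r x y).erase p := by
          rw [srcs_swap r x y, snks_swap r x y,
            Finset.inter_comm (snks r x y) (srcs r x y)] at hsub
          exact hsub
        have hcard'' : (srcs r'' x'' y'' ∩ snks r'' x'' y'').card ≤ N := by
          have h1 := Finset.card_le_card hsub'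
          have h2 := Finset.card_erase_lt_of_mem hp
          omega
        obtain ⟨n', r', x', y', hrep, hdisj, hcost⟩ := ih (fun m => -μ m) _ r'' x'' y'' h'' hcard''
        have hc2 : cost r'' x'' y'' ≤ cost r x y := le_trans hc (le_of_eq (cost_swap r x y))
        exact concl_swap ⟨n', r', x', y', hrep, hdisj, le_trans hcost hc2⟩

end DisjRepAux

/-- Every molecular representation of `μ` can be replaced by one whose sets of sources and
sinks are disjoint, without increasing the transportation cost. -/
theorem disjoint_molecular_representation {M : Type*} [MetricSpace M] (μ : M → ℝ) {n : ℕ}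
    (r : Fin n → ℝ) (x y : Fin n → M) (h : IsMolRep μ r x y) :
    ∃ (n' : ℕ) (r' : Fin n' → ℝ) (x' y' : Fin n' → M),
      IsMolRep μ r' x' y' ∧ Disjoint (Set.range x') (Set.range y') ∧
      molCost dist r' x' y' ≤ molCost dist r x y := by
  classical
  have hrep : DisjRepAux.Rep μ r x y := ⟨fun j => le_of_lt (h.1 j), h.2.2⟩
  obtain ⟨n', r', x', y', h1, h2, h3⟩ :=
    DisjRepAux.main _ μ (Fin n) r x y hrep le_rfl
  exact ⟨n', r', x', y', h1, h2, h3⟩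
end

section
/- Let (M,d) be a metric space, μ ∈ F̃(M), and let μ = Σ_{j=1}^n r_j (δ_{x_j} − δ_{y_j}) be an optimal molecular representation. If (j_i)_{i=1}^l is a sequence of pairwise distinct indices in {1,…,n} with x_{j_{i+1}} = y_{j_i} for i = 1,…,l−1 (a path of the representation), then d(x_{j_1}, y_{j_l}) = Σ_{i=1}^l d(x_{j_i}, y_{j_i}). In particular, the representation contains no circle, i.e., no such path with y_{j_l} = x_{j_1}. -/
open scoped BigOperators Classical

lemma sum_sub_ind {n : ℕ} (r : Fin n → ℝ) (ε : ℝ) (T : Finset (Fin n)) (g : Fin n → ℝ) :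
    ∑ k, (r k - ε * (if k ∈ T then (1:ℝ) else 0)) * g k
      = (∑ k, r k * g k) - ε * ∑ k ∈ T, g k := by
  have hk : ∀ k, (r k - ε * (if k ∈ T then (1:ℝ) else 0)) * g k
      = r k * g k - ε * (if k ∈ T then g k else 0) := by
    intro k; by_cases hk : k ∈ T <;> simp [hk] <;> ring
  simp_rw [hk, Finset.sum_sub_distrib, ← Finset.mul_sum, Finset.sum_ite_mem,
    Finset.univ_inter]

lemma telescope_ind {M : Type*} {n l : ℕ} (x y : Fin n → M) (j : Fin (l+1) → Fin n)
    (hpath : ∀ i : Fin l, x (j i.succ) = y (j i.castSucc)) (m : M) :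
    ∑ i, ((if x (j i) = m then (1:ℝ) else 0) - (if y (j i) = m then 1 else 0))
      = (if x (j 0) = m then 1 else 0) - (if y (j (Fin.last l)) = m then 1 else 0) := by
  rw [Finset.sum_sub_distrib]
  rw [Fin.sum_univ_succ (fun i => if x (j i) = m then (1:ℝ) else 0)]
  rw [Fin.sum_univ_castSucc (fun i => if y (j i) = m then (1:ℝ) else 0)]
  have h1 : ∀ i : Fin l, (if x (j i.succ) = m then (1:ℝ) else 0)
      = (if y (j i.castSucc) = m then 1 else 0) := by
    intro i; rw [hpath i]
  simp_rw [h1]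
  ring

lemma path_triangle {M : Type*} [MetricSpace M] {n l : ℕ} (x y : Fin n → M)
    (j : Fin (l+1) → Fin n) (hpath : ∀ i : Fin l, x (j i.succ) = y (j i.castSucc)) :
    dist (x (j 0)) (y (j (Fin.last l))) ≤ ∑ i, dist (x (j i)) (y (j i)) := by
  set f : ℕ → M := fun i => if h : i < l + 1 then x (j ⟨i, h⟩) else y (j (Fin.last l)) with hf
  have h0 : f 0 = x (j 0) := by simp [hf]
  have hend : f (l+1) = y (j (Fin.last l)) := by simp [hf]
  have H := dist_le_range_sum_dist f (l+1)
  rw [h0, hend] at H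
  refine H.trans_eq ?_
  rw [← Fin.sum_univ_eq_sum_range (fun i => dist (f i) (f (i+1))) (l+1)]
  apply Finset.sum_congr rfl
  intro i _
  congr 1
  · simp [hf, i.isLt]
    intro h; exact absurd h (by have := i.isLt; omega)
  · by_cases hi : (i:ℕ) + 1 < l + 1
    · have hl : (i:ℕ) < l := Nat.lt_of_succ_lt_succ hi
      have hp := hpath ⟨i, hl⟩
      simp only [hf, dif_pos hi]
      rw [show (⟨(i:ℕ)+1, hi⟩ : Fin (l+1)) = (⟨(i:ℕ), hl⟩ : Fin l).succ from rfl, hp]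
      congr 1
    · have hil : i = Fin.last l := Fin.ext (by simp [Fin.val_last]; omega)
      simp [hf, hi, hil]

lemma tcNorm_le_molCost {M : Type*} [MetricSpace M] (μ : M → ℝ) {n : ℕ}
    (r : Fin n → ℝ) (x y : Fin n → M) (h : IsMolRep μ r x y) :
    tcNorm dist μ ≤ molCost dist r x y := by
  apply csInf_le
  · refine ⟨0, ?_⟩
    rintro c ⟨n', r', x', y', h', rfl⟩
    exact Finset.sum_nonneg fun k _ => mul_nonneg (h'.1 k).le dist_nonneg
  · exact ⟨n, r, x, y, h, rfl⟩

/-- In an optimal molecular representation, along any path `(j i)` (pairwise distinct indices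
with `x (j (i+1)) = y (j i)`) the distances add up:
`dist (x (j 0)) (y (j last)) = ∑ i, dist (x (j i)) (y (j i))`.  In particular no such path is a
circle, i.e. `y (j last) ≠ x (j 0)`. -/
theorem optimal_representation_path {M : Type*} [MetricSpace M] (μ : M → ℝ) {n : ℕ}
    (r : Fin n → ℝ) (x y : Fin n → M) (h : IsMolRep μ r x y)
    (hopt : molCost dist r x y = tcNorm dist μ)
    (l : ℕ) (j : Fin (l + 1) → Fin n) (hinj : Function.Injective j)
    (hpath : ∀ i : Fin l, x (j i.succ) = y (j i.castSucc)) :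
    dist (x (j 0)) (y (j (Fin.last l))) = ∑ i, dist (x (j i)) (y (j i)) ∧
      y (j (Fin.last l)) ≠ x (j 0) := by
  obtain ⟨hr, hxy, hμ⟩ := h
  set T : Finset (Fin n) := Finset.image j Finset.univ with hT
  have himg : ∀ g : Fin n → ℝ, ∑ k ∈ T, g k = ∑ i, g (j i) := fun g =>
    Finset.sum_image (fun a _ b _ hab => hinj hab)
  have hneU : (Finset.univ : Finset (Fin (l+1))).Nonempty := Finset.univ_nonempty
  set m0 : ℝ := Finset.univ.inf' hneU (fun i => r (j i)) with hm0
  have hm0pos : 0 < m0 := by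
    rw [hm0, Finset.lt_inf'_iff]
    exact fun i _ => hr (j i)
  set ε : ℝ := m0 / 2 with hε
  have hεpos : 0 < ε := by positivity
  set r' : Fin n → ℝ := fun k => r k - ε * (if k ∈ T then (1:ℝ) else 0) with hr'def
  have hr' : ∀ k, 0 < r' k := by
    intro k
    by_cases hk : k ∈ T
    · obtain ⟨i, _, rfl⟩ := Finset.mem_image.1 hk
      have hle : m0 ≤ r (j i) := Finset.inf'_le _ (Finset.mem_univ i)
      simp only [hr'def, if_pos hk, mul_one]
      have : ε < m0 := by rw [hε]; linarith
      linarith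
    · simp only [hr'def, if_neg hk, mul_zero, sub_zero]
      exact hr k
  -- measure identity for r'
  have hmeas : ∀ m : M,
      ∑ k, r' k * ((if x k = m then (1:ℝ) else 0) - (if y k = m then 1 else 0))
        = μ m - ε * ((if x (j 0) = m then 1 else 0)
            - (if y (j (Fin.last l)) = m then 1 else 0)) := by
    intro m
    rw [hr'def]
    rw [sum_sub_ind r ε T (fun k => (if x k = m then (1:ℝ) else 0) - (if y k = m then 1 else 0))]
    rw [himg, telescope_ind x y j hpath m, ← hμ m]
  set D : ℝ := ∑ i, dist (x (j i)) (y (j i)) with hD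
  have hDpos : 0 < D := by
    rw [hD]
    exact Finset.sum_pos (fun i _ => dist_pos.2 (hxy (j i))) hneU
  have hcost : ∑ k, r' k * dist (x k) (y k) = molCost dist r x y - ε * D := by
    rw [hr'def, sum_sub_ind r ε T (fun k => dist (x k) (y k)), himg]
    rfl
  -- no circle
  have hcirc : y (j (Fin.last l)) ≠ x (j 0) := by
    intro hc
    have hrep : IsMolRep μ r' x y := by
      refine ⟨hr', hxy, fun m => ?_⟩
      rw [hmeas m, hc]
      ring
    have hle := tcNorm_le_molCost μ r' x y hrep
    have : molCost dist r' x y = molCost dist r x y - ε * D := hcost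
    rw [this, ← hopt] at hle
    nlinarith
  refine ⟨?_, hcirc⟩
  -- new representation on Fin (n+1)
  set c0 : M := x (j 0) with hc0
  set d0 : M := y (j (Fin.last l)) with hd0
  have hc0d0 : c0 ≠ d0 := fun hcc => hcirc hcc.symm
  set r'' : Fin (n+1) → ℝ := Fin.snoc r' ε with hr''
  set x'' : Fin (n+1) → M := Fin.snoc x c0 with hx''
  set y'' : Fin (n+1) → M := Fin.snoc y d0 with hy''
  have hrep : IsMolRep μ r'' x'' y'' := by
    refine ⟨?_, ?_, ?_⟩
    · intro k
      refine Fin.lastCases ?_ (fun k => ?_) k <;>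
        simp [hr'', Fin.snoc_last, Fin.snoc_castSucc, hεpos, hr' _]
    · intro k
      refine Fin.lastCases ?_ (fun k => ?_) k <;>
        simp [hx'', hy'', Fin.snoc_last, Fin.snoc_castSucc, hc0d0, hxy _]
    · intro m
      rw [Fin.sum_univ_castSucc
        (fun k => r'' k * ((if x'' k = m then (1:ℝ) else 0) - (if y'' k = m then 1 else 0)))]
      simp only [hr'', hx'', hy'', Fin.snoc_castSucc, Fin.snoc_last]
      rw [hmeas m]
      ring
  have hle := tcNorm_le_molCost μ r'' x'' y'' hrep
  have hcost'' : molCost dist r'' x'' y'' = molCost dist r x y - ε * D + ε * dist c0 d0 := by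
    rw [molCost, Fin.sum_univ_castSucc (fun k => r'' k * dist (x'' k) (y'' k))]
    simp only [hr'', hx'', hy'', Fin.snoc_castSucc, Fin.snoc_last]
    rw [hcost]
  rw [hcost'', ← hopt] at hle
  have hDle : D ≤ dist c0 d0 := by nlinarith
  have htri : dist c0 d0 ≤ D := path_triangle x y j hpath
  rw [hc0, hd0] at hDle htri ⊢
  linarith
end

section
/- Let (M,d) be a metric space and x ≠ y in M such that there is no z ∈ M \ {x,y} with d(x,y) = d(x,z) + d(z,y). Then every optimal molecular representation δ_x − δ_y = Σ_{j=1}^n r_j (δ_{x_j} − δ_{y_j}) satisfies x_j = x and y_j = y for all j = 1,…,n (and hence Σ_{j=1}^n r_j = 1). -/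
open scoped BigOperators Classical

lemma molrep_pairing {M : Type*} (x y : M) {n : ℕ} (r : Fin n → ℝ) (xs ys : Fin n → M)
    (hμ : ∀ m, (if x = m then (1 : ℝ) else 0) - (if y = m then (1 : ℝ) else 0)
      = ∑ j, r j * ((if xs j = m then (1 : ℝ) else 0) - (if ys j = m then (1 : ℝ) else 0)))
    (f : M → ℝ) : ∑ j, r j * (f (xs j) - f (ys j)) = f x - f y := by
  classical
  set S : Finset M :=
    insert x (insert y (Finset.image xs Finset.univ ∪ Finset.image ys Finset.univ)) with hS
  have hx : x ∈ S := by simp [hS]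
  have hy : y ∈ S := by simp [hS]
  have hxs : ∀ j, xs j ∈ S := by intro j; simp [hS]
  have hys : ∀ j, ys j ∈ S := by intro j; simp [hS]
  have key : ∀ a : M, a ∈ S → ∑ m ∈ S, (if a = m then (1 : ℝ) else 0) * f m = f a := by
    intro a ha
    rw [Finset.sum_congr rfl (fun m _ => by rw [ite_mul, one_mul, zero_mul])]
    rw [Finset.sum_ite_eq S a f, if_pos ha]
  have main : ∑ m ∈ S, ((if x = m then (1 : ℝ) else 0) - (if y = m then (1 : ℝ) else 0)) * f m
      = f x - f y := by
    rw [Finset.sum_congr rfl (fun m _ => by rw [sub_mul]), Finset.sum_sub_distrib,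
      key x hx, key y hy]
  calc ∑ j, r j * (f (xs j) - f (ys j))
      = ∑ j, ∑ m ∈ S, (r j * ((if xs j = m then (1 : ℝ) else 0)
          - (if ys j = m then (1 : ℝ) else 0))) * f m := by
        refine Finset.sum_congr rfl fun j _ => ?_
        have hstep : ∑ m ∈ S, (r j * ((if xs j = m then (1 : ℝ) else 0)
            - (if ys j = m then (1 : ℝ) else 0))) * f m
            = r j * (∑ m ∈ S, ((if xs j = m then (1 : ℝ) else 0) * f m
              - (if ys j = m then (1 : ℝ) else 0) * f m)) := by
          rw [Finset.mul_sum]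
          exact Finset.sum_congr rfl fun m _ => by ring
        rw [hstep, Finset.sum_sub_distrib, key _ (hxs j), key _ (hys j)]
    _ = ∑ m ∈ S, (∑ j, r j * ((if xs j = m then (1 : ℝ) else 0)
          - (if ys j = m then (1 : ℝ) else 0))) * f m := by
        rw [Finset.sum_comm]
        exact Finset.sum_congr rfl fun m _ => (Finset.sum_mul ..).symm
    _ = f x - f y := by
        rw [Finset.sum_congr rfl fun m _ => by rw [← hμ m]]
        exact main

lemma molrep_cost_ge {M : Type*} [MetricSpace M] (x y : M) {n : ℕ} (r : Fin n → ℝ)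
    (xs ys : Fin n → M)
    (h : IsMolRep (fun m => (if x = m then (1 : ℝ) else 0) - (if y = m then (1 : ℝ) else 0))
      r xs ys) : dist x y ≤ molCost dist r xs ys := by
  obtain ⟨hr, -, hμ⟩ := h
  have hp := molrep_pairing x y r xs ys hμ (fun m => dist m y)
  simp only [dist_self, sub_zero] at hp
  rw [← hp, molCost]
  refine Finset.sum_le_sum fun j _ => ?_
  have hle : dist (xs j) y - dist (ys j) y ≤ dist (xs j) (ys j) :=
    le_trans (le_abs_self _) (abs_dist_sub_le _ _ _)
  exact mul_le_mul_of_nonneg_left hle (le_of_lt (hr j))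

/-- If `x ≠ y` and no point `z ∉ {x, y}` lies metrically between `x` and `y`, then every optimal
molecular representation of `δ_x - δ_y` uses only the molecule `δ_x - δ_y`, and its coefficients
add up to `1`. -/
theorem optimal_representation_of_molecule {M : Type*} [MetricSpace M] (x y : M) (hxy : x ≠ y)
    (hmid : ¬∃ z : M, z ≠ x ∧ z ≠ y ∧ dist x y = dist x z + dist z y)
    {n : ℕ} (r : Fin n → ℝ) (xs ys : Fin n → M)
    (h : IsMolRep (fun m => (if x = m then (1 : ℝ) else 0) - (if y = m then (1 : ℝ) else 0))
      r xs ys)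
    (hopt : molCost dist r xs ys =
      tcNorm dist (fun m => (if x = m then (1 : ℝ) else 0) - (if y = m then (1 : ℝ) else 0))) :
    (∀ j, xs j = x ∧ ys j = y) ∧ ∑ j, r j = 1 := by
  classical
  obtain ⟨hr, hne, hμ⟩ := h
  set μ : M → ℝ := fun m => (if x = m then (1 : ℝ) else 0) - (if y = m then (1 : ℝ) else 0)
    with hμdef
  -- the trivial representation
  have htriv : IsMolRep μ (fun _ : Fin 1 => (1 : ℝ)) (fun _ => x) (fun _ => y) := by
    refine ⟨fun _ => one_pos, fun _ => hxy, fun m => ?_⟩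
    simp [μ, Fin.sum_univ_one]
  have hbdd : BddBelow { c | ∃ (n : ℕ) (r : Fin n → ℝ) (x' y' : Fin n → M),
      IsMolRep μ r x' y' ∧ c = molCost dist r x' y' } := by
    refine ⟨dist x y, fun c hc => ?_⟩
    obtain ⟨n', r', xs', ys', hrep, rfl⟩ := hc
    exact molrep_cost_ge x y r' xs' ys' hrep
  have hmem : dist x y ∈ { c | ∃ (n : ℕ) (r : Fin n → ℝ) (x' y' : Fin n → M),
      IsMolRep μ r x' y' ∧ c = molCost dist r x' y' } := by
    exact ⟨1, _, _, _, htriv, by simp [molCost]⟩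
  have hle : tcNorm dist μ ≤ dist x y := csInf_le hbdd hmem
  have hge : dist x y ≤ molCost dist r xs ys := molrep_cost_ge x y r xs ys ⟨hr, hne, hμ⟩
  have hcost : molCost dist r xs ys = dist x y := le_antisymm (hopt ▸ hle) hge
  -- termwise equalities
  have hpair := molrep_pairing x y r xs ys hμ
  have hB : ∀ j, dist (xs j) y = dist (xs j) (ys j) + dist (ys j) y := by
    have hp := hpair (fun m => dist m y)
    simp only [dist_self, sub_zero] at hp
    have hsum : ∑ j, r j * (dist (xs j) y - dist (ys j) y)
        = ∑ j, r j * dist (xs j) (ys j) := by rw [hp, ← hcost, molCost]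
    have hterm := (Finset.sum_eq_sum_iff_of_le (fun j _ =>
      mul_le_mul_of_nonneg_left (le_trans (le_abs_self _) (abs_dist_sub_le _ _ _))
        (le_of_lt (hr j)))).mp hsum
    intro j
    have := hterm j (Finset.mem_univ j)
    have h2 := mul_left_cancel₀ (ne_of_gt (hr j)) this
    linarith
  have hA : ∀ j, dist x (ys j) = dist x (xs j) + dist (xs j) (ys j) := by
    have hp := hpair (fun m => -dist x m)
    simp only [dist_self, neg_zero, zero_sub, sub_neg_eq_add, zero_add, neg_sub] at hp
    have hsum : ∑ j, r j * (-dist x (xs j) + dist x (ys j))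
        = ∑ j, r j * dist (xs j) (ys j) := by
      rw [hp, ← hcost]; simp [molCost]
    have hterm := (Finset.sum_eq_sum_iff_of_le (fun j _ => ?_)).mp hsum
    · intro j
      have := hterm j (Finset.mem_univ j)
      have h2 := mul_left_cancel₀ (ne_of_gt (hr j)) this
      linarith
    · refine mul_le_mul_of_nonneg_left ?_ (le_of_lt (hr j))
      have : |dist (ys j) x - dist (xs j) x| ≤ dist (ys j) (xs j) := abs_dist_sub_le _ _ _
      rw [dist_comm (ys j) x, dist_comm (xs j) x, dist_comm (ys j) (xs j)] at this
      have := le_trans (le_abs_self _) this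
      linarith
  have hxsy : ∀ j, xs j ≠ y := by
    intro j hj
    have := hB j
    rw [hj, dist_self] at this
    have hpos : 0 < dist (xs j) (ys j) := dist_pos.mpr (hne j)
    rw [hj] at hpos
    have := dist_nonneg (x := ys j) (y := y)
    linarith
  have hysx : ∀ j, ys j ≠ x := by
    intro j hj
    have hthis := hA j
    rw [hj, dist_self] at hthis
    have hpos : 0 < dist (xs j) (ys j) := dist_pos.mpr (hne j)
    rw [hj] at hpos
    have := dist_nonneg (x := x) (y := xs j)
    linarith
  -- all sources equal x
  have hxall : ∀ j, xs j = x := by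
    by_contra hcon
    push_neg at hcon
    obtain ⟨j0, hj0⟩ := hcon
    set J : Finset (Fin n) := Finset.univ.filter (fun j => xs j ≠ x) with hJdef
    have hJne : J.Nonempty := ⟨j0, by simp [hJdef, hj0]⟩
    obtain ⟨k, hkJ, hkmin⟩ := Finset.exists_min_image J (fun j => dist x (xs j)) hJne
    have hkx : xs k ≠ x := (Finset.mem_filter.mp hkJ).2
    have hky : xs k ≠ y := hxsy k
    -- mass balance at z = xs k
    have hz0 : (0 : ℝ) = ∑ j, r j * ((if xs j = xs k then (1 : ℝ) else 0)
        - (if ys j = xs k then (1 : ℝ) else 0)) := by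
      have hmm := hμ (xs k)
      simp only [hμdef] at hmm
      rw [if_neg (show ¬ x = xs k from fun hh => hkx hh.symm),
        if_neg (show ¬ y = xs k from fun hh => hky hh.symm), sub_zero] at hmm
      exact hmm
    have hex : ∃ k', ys k' = xs k := by
      by_contra hno
      push_neg at hno
      have hpos : (0 : ℝ) < ∑ j, r j * ((if xs j = xs k then (1 : ℝ) else 0)
          - (if ys j = xs k then (1 : ℝ) else 0)) := by
        refine Finset.sum_pos' (fun i _ => ?_) ⟨k, Finset.mem_univ k, ?_⟩
        · rw [if_neg (hno i), sub_zero]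
          split_ifs
          · exact le_of_lt (by simpa using hr i)
          · simp
        · rw [if_pos rfl, if_neg (hno k), sub_zero, mul_one]; exact hr k
      linarith
    obtain ⟨k', hk'⟩ := hex
    have hAk' := hA k'
    rw [hk'] at hAk'
    have hxk' : xs k' = x := by
      by_contra hxx
      have hk'J : k' ∈ J := by simp [hJdef, hxx]
      have hmin := hkmin k' hk'J
      have hpos : 0 < dist (xs k') (ys k') := dist_pos.mpr (hne k')
      rw [hk'] at hpos
      linarith
    refine hmid ⟨xs k, hkx, hky, ?_⟩
    have hBk' := hB k'
    rw [hxk', hk'] at hBk'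
    exact hBk'
  -- all sinks equal y
  have hyall : ∀ j, ys j = y := by
    intro j
    by_contra hyj
    have hyx : ys j ≠ x := hysx j
    have hz0 : (0 : ℝ) = ∑ i, r i * ((if xs i = ys j then (1 : ℝ) else 0)
        - (if ys i = ys j then (1 : ℝ) else 0)) := by
      have hmm := hμ (ys j)
      simp only [hμdef] at hmm
      rw [if_neg (show ¬ x = ys j from fun hh => hyx hh.symm),
        if_neg (show ¬ y = ys j from fun hh => hyj hh.symm), sub_zero] at hmm
      exact hmm
    have hxne : ∀ i, xs i ≠ ys j := by
      intro i
      rw [hxall i]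
      exact fun hh => hyx hh.symm
    have hneg : ∑ i, r i * ((if xs i = ys j then (1 : ℝ) else 0)
        - (if ys i = ys j then (1 : ℝ) else 0))
        = -∑ i, r i * (if ys i = ys j then (1 : ℝ) else 0) := by
      rw [← Finset.sum_neg_distrib]
      refine Finset.sum_congr rfl fun i _ => ?_
      rw [if_neg (hxne i)]
      ring
    have hpos : (0 : ℝ) < ∑ i, r i * (if ys i = ys j then (1 : ℝ) else 0) := by
      refine Finset.sum_pos' (fun i _ => ?_) ⟨j, Finset.mem_univ j, ?_⟩
      · split_ifs
        · simpa using le_of_lt (hr i)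
        · simp
      · rw [if_pos rfl, mul_one]; exact hr j
    rw [hneg] at hz0
    linarith
  refine ⟨fun j => ⟨hxall j, hyall j⟩, ?_⟩
  have := hμ x
  simp only [hμdef] at this
  simp only [if_true, if_neg (show ¬ y = x from fun hh => hxy hh.symm), sub_zero] at this
  have heq : ∀ j, r j * ((if xs j = x then (1 : ℝ) else 0)
      - (if ys j = x then (1 : ℝ) else 0)) = r j := by
    intro j
    rw [if_pos (hxall j), if_neg (fun hh => hxy ((hyall j).symm.trans hh).symm)]
    ring
  rw [Finset.sum_congr rfl fun j _ => heq j] at this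
  linarith
end

section
/- Let T = (V,E) be a (finite or countable) tree with weight function w: E → (0,∞) and geodesic metric d_T, and fix a root v₀ ∈ V. Then for every μ ∈ F̃(V) one has ‖μ‖_tc = Σ_{e∈E} w(e)·|μ(T_e)|, where for each edge e, T_e denotes the set of vertices v such that the endpoint of e farther from v₀ lies on the path from v₀ to v. -/
open scoped BigOperators Classical

namespace TcAux
variable {V : Type*} {G : SimpleGraph V}

lemma tree_path_eq (hG : G.IsTree) {u v : V} {p q : G.Walk u v} (hp : p.IsPath) (hq : q.IsPath) :
    p = q := (hG.existsUnique_path u v).unique hp hq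

lemma tree_step (hG : G.IsTree) {v₀ : V} (P : ∀ x : V, G.Walk v₀ x) (hP : ∀ x, (P x).IsPath)
    {a b : V} (h : G.Adj a b) :
    P b = (P a).concat h ∨ P a = (P b).concat h.symm := by
  by_cases hb : b ∈ (P a).support
  · right
    have ht : (P a).takeUntil b hb = P b := tree_path_eq hG ((hP a).takeUntil hb) (hP b)
    have hd : (P a).dropUntil b hb = SimpleGraph.Walk.cons h.symm SimpleGraph.Walk.nil := by
      apply tree_path_eq hG ((hP a).dropUntil hb)
      simp [SimpleGraph.Walk.cons_isPath_iff, h.ne']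
    calc P a = ((P a).takeUntil b hb).append ((P a).dropUntil b hb) :=
          ((P a).take_spec hb).symm
      _ = (P b).concat h.symm := by
          rw [ht, hd, SimpleGraph.Walk.concat_eq_append]
  · left
    refine tree_path_eq hG (hP b) ?_
    rw [← SimpleGraph.Walk.isPath_reverse_iff, SimpleGraph.Walk.reverse_concat,
      SimpleGraph.Walk.cons_isPath_iff]
    refine ⟨(hP a).reverse, ?_⟩
    simpa using hb

variable {v₀ : V} {P : ∀ x : V, G.Walk v₀ x} {nr fr : Sym2 V → V}

lemma orient
    (hadj : ∀ e, e ∈ G.edgeSet → G.Adj (nr e) (fr e))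
    (heq : ∀ e, (he : e ∈ G.edgeSet) → e = s(nr e, fr e))
    (hPc : ∀ e, (he : e ∈ G.edgeSet) → P (fr e) = (P (nr e)).concat (hadj e he))
    {a b : V} (h : G.Adj a b) (hc : P b = (P a).concat h) :
    nr s(a, b) = a ∧ fr s(a, b) = b := by
  have he : s(a, b) ∈ G.edgeSet := h
  have h1 := heq _ he
  have h2 := hPc _ he
  rcases Sym2.eq_iff.mp h1 with ⟨ha, hb⟩ | ⟨ha, hb⟩
  · exact ⟨ha.symm, hb.symm⟩
  · exfalso
    have l1 := congrArg SimpleGraph.Walk.length hc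
    have l2 := congrArg SimpleGraph.Walk.length h2
    rw [SimpleGraph.Walk.length_concat] at l1 l2
    rw [← ha, ← hb] at l2
    omega

lemma tele (hG : G.IsTree) (hP : ∀ x, (P x).IsPath)
    (hadj : ∀ e, e ∈ G.edgeSet → G.Adj (nr e) (fr e))
    (heq : ∀ e, (he : e ∈ G.edgeSet) → e = s(nr e, fr e))
    (hPc : ∀ e, (he : e ∈ G.edgeSet) → P (fr e) = (P (nr e)).concat (hadj e he)) :
    ∀ (n : ℕ) (x : V), (P x).length = n → ∀ m : V,
      (((P x).edges.map
          (fun e => (if fr e = m then (1 : ℝ) else 0) - (if nr e = m then (1 : ℝ) else 0))).sum)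
        = (if x = m then (1 : ℝ) else 0) - (if v₀ = m then (1 : ℝ) else 0) := by
  intro n
  induction n using Nat.strong_induction_on with
  | _ n ih =>
    intro x hx m
    by_cases hxv : x = v₀
    · subst hxv
      have hnil : P x = SimpleGraph.Walk.nil := tree_path_eq hG (hP x) SimpleGraph.Walk.IsPath.nil
      rw [hnil]; simp
    · obtain ⟨c, h, q, hq⟩ := SimpleGraph.Walk.exists_eq_cons_of_ne hxv ((P x).reverse)
      have hPx : P x = q.reverse.concat h.symm := by
        have h' := congrArg SimpleGraph.Walk.reverse hq
        rwa [SimpleGraph.Walk.reverse_reverse, SimpleGraph.Walk.reverse_cons] at h'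
      have hqp : q.reverse.IsPath := by
        have h1 : (P x).reverse.IsPath := (hP x).reverse
        rw [hq, SimpleGraph.Walk.cons_isPath_iff] at h1
        exact h1.1.reverse
      have hqc : q.reverse = P c := tree_path_eq hG hqp (hP c)
      have hlen : (P c).length < n := by
        have h' := congrArg SimpleGraph.Walk.length hPx
        rw [SimpleGraph.Walk.length_concat, hqc] at h'
        omega
      have hor : nr s(c, x) = c ∧ fr s(c, x) = x := by
        refine orient hadj heq hPc h.symm ?_
        rw [hPx, hqc]
      rw [hPx, SimpleGraph.Walk.edges_concat, hqc, List.concat_eq_append, List.map_append,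
        List.sum_append]
      rw [ih _ hlen c rfl m]
      simp only [List.map_cons, List.map_nil, List.sum_cons, List.sum_nil, add_zero,
        hor.1, hor.2]
      by_cases hcm : c = m <;> by_cases hvm : v₀ = m <;> by_cases hxm : x = m <;>
        simp [hcm, hvm, hxm] <;> ring

lemma phi_step (hG : G.IsTree) (hP : ∀ x, (P x).IsPath) {a b : V} (h : G.Adj a b) (e : Sym2 V) :
    |(if e ∈ (P a).edges then (1 : ℝ) else 0) - (if e ∈ (P b).edges then (1 : ℝ) else 0)|
      ≤ if s(a, b) = e then 1 else 0 := by
  have key : ∀ (u w : V) (h' : G.Adj u w), P w = (P u).concat h' →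
      |(if e ∈ (P u).edges then (1 : ℝ) else 0) - (if e ∈ (P w).edges then (1 : ℝ) else 0)|
        ≤ if s(u, w) = e then 1 else 0 := by
    intro u w h' hc
    have hmem : e ∈ (P w).edges ↔ e ∈ (P u).edges ∨ e = s(u, w) := by
      rw [hc, SimpleGraph.Walk.edges_concat, List.concat_eq_append, List.mem_append]
      simp
    have hnm : s(u, w) ∉ (P u).edges := by
      have hnd : (P w).edges.Nodup := (hP w).edges_nodup
      rw [hc, SimpleGraph.Walk.edges_concat, List.concat_eq_append] at hnd
      exact fun hmem' => (List.disjoint_of_nodup_append hnd) hmem' (by simp)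
    by_cases hse : e = s(u, w)
    · subst hse
      have h0 : (if s(u,w) ∈ (P u).edges then (1:ℝ) else 0) = 0 := if_neg hnm
      have h1 : (if s(u,w) ∈ (P w).edges then (1:ℝ) else 0) = 1 := if_pos (hmem.mpr (Or.inr rfl))
      rw [h0, h1, if_pos rfl]
      norm_num
    · have hiff : e ∈ (P w).edges ↔ e ∈ (P u).edges := by rw [hmem]; simp [hse]
      rw [if_neg (fun hh : s(u,w) = e => hse hh.symm)]
      by_cases hu : e ∈ (P u).edges <;> simp [hiff, hu]
  rcases tree_step hG P hP h with hc | hc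
  · exact key a b h hc
  · have h2 := key b a h.symm hc
    rw [abs_sub_comm] at h2
    rwa [Sym2.eq_swap] at h2

lemma phi_walk (hG : G.IsTree) (hP : ∀ x, (P x).IsPath) :
    ∀ {u w : V} (p : G.Walk u w) (e : Sym2 V),
      |(if e ∈ (P u).edges then (1 : ℝ) else 0) - (if e ∈ (P w).edges then (1 : ℝ) else 0)|
        ≤ ((p.edges.map (fun e' => if e' = e then (1 : ℝ) else 0)).sum) := by
  intro u w p e
  induction p with
  | nil => simp
  | cons h q ihq =>
    rename_i a b c
    rw [SimpleGraph.Walk.edges_cons, List.map_cons, List.sum_cons]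
    calc |(if e ∈ (P a).edges then (1:ℝ) else 0) - (if e ∈ (P c).edges then (1:ℝ) else 0)|
        ≤ |(if e ∈ (P a).edges then (1:ℝ) else 0) - (if e ∈ (P b).edges then (1:ℝ) else 0)|
          + |(if e ∈ (P b).edges then (1:ℝ) else 0) - (if e ∈ (P c).edges then (1:ℝ) else 0)| := by
          exact abs_sub_le _ _ _
      _ ≤ (if s(a, b) = e then 1 else 0)
          + ((q.edges.map (fun e' => if e' = e then (1 : ℝ) else 0)).sum) :=
          add_le_add (phi_step hG hP h e) ihq


end TcAux

/-- `d` is the geodesic metric on the connected graph `G` generated by the weight function `w`: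
`d u v` is the minimum of the `w`-lengths of paths from `u` to `v`. -/
def IsGeodesicOf {V : Type*} (G : SimpleGraph V) (w : Sym2 V → ℝ) (d : V → V → ℝ) : Prop :=
  ∀ u v : V, IsLeast { c | ∃ p : G.Walk u v, p.IsPath ∧ c = (p.edges.map w).sum } (d u v)

/-- For a (finite or countable) weighted tree `T = (V, E)` with geodesic metric `d` and root
`v₀`, and every `μ ∈ F̃(V)`:  `‖μ‖_tc = ∑_{e ∈ E} w e · |μ(T_e)|`, where `T_e` is the set of
vertices `x` such that `e` lies on the (unique) path from `v₀` to `x` (equivalently, the endpoint of `e`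
farther from `v₀` lies on that path). -/
theorem tcNorm_tree_formula {V : Type*} [Countable V] (G : SimpleGraph V) (hG : G.IsTree)
    (w : Sym2 V → ℝ) (hw : ∀ e ∈ G.edgeSet, 0 < w e)
    (d : V → V → ℝ) (hd : IsGeodesicOf G w d) (v₀ : V)
    (P : ∀ x : V, G.Walk v₀ x) (hP : ∀ x, (P x).IsPath)
    (μ : V →₀ ℝ) (hμ : (μ.sum fun _ v => v) = 0) :
    tcNorm d ⇑μ
      = ∑' e : G.edgeSet, w ↑e * |∑ x ∈ μ.support.filter fun x => ↑e ∈ (P x).edges, μ x| := by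
  classical
  -- orientation choice
  have hch : ∀ e : Sym2 V, e ∈ G.edgeSet →
      ∃ a b : V, ∃ h' : G.Adj a b, e = s(a, b) ∧ P b = (P a).concat h' := by
    intro e
    induction e using Sym2.ind with
    | _ a b =>
      intro he
      rw [SimpleGraph.mem_edgeSet] at he
      rcases TcAux.tree_step hG P hP he with hc | hc
      · exact ⟨a, b, he, rfl, hc⟩
      · exact ⟨b, a, he.symm, Sym2.eq_swap.symm, hc⟩
  have hne : Nonempty V := ⟨v₀⟩
  choose! nr fr hadj hprop using hch
  have heq : ∀ e, e ∈ G.edgeSet → e = s(nr e, fr e) := fun e he => (hprop e he).1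
  have hPc : ∀ e, (he : e ∈ G.edgeSet) → P (fr e) = (P (nr e)).concat (hadj e he) :=
    fun e he => (hprop e he).2
  obtain ⟨F, hFe⟩ : ∃ F : Sym2 V → ℝ,
      ∀ e, F e = ∑ x ∈ μ.support.filter (fun x => e ∈ (P x).edges), μ x := ⟨_, fun _ => rfl⟩
  set S : Finset (Sym2 V) := μ.support.biUnion (fun x => (P x).edges.toFinset) with hS
  have hSe : ∀ e ∈ S, e ∈ G.edgeSet := by
    intro e he
    rw [hS, Finset.mem_biUnion] at he
    obtain ⟨x, -, hx⟩ := he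
    exact SimpleGraph.Walk.edges_subset_edgeSet _ (List.mem_toFinset.mp hx)
  have hF0 : ∀ e ∉ S, F e = 0 := by
    intro e he
    rw [hFe]
    have hemp : μ.support.filter (fun x => e ∈ (P x).edges) = ∅ := by
      rw [Finset.filter_eq_empty_iff]
      intro x hx hmem
      exact he (Finset.mem_biUnion.mpr ⟨x, hx, List.mem_toFinset.mpr hmem⟩)
    rw [hemp, Finset.sum_empty]
  have hsum0 : ∑ x ∈ μ.support, μ x = 0 := hμ
  have hF2 : ∀ e, F e = ∑ x ∈ μ.support, μ x * (if e ∈ (P x).edges then (1 : ℝ) else 0) := by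
    intro e
    rw [hFe e, Finset.sum_filter]
    exact Finset.sum_congr rfl fun x _ => by by_cases hx : e ∈ (P x).edges <;> simp [hx]
  have hdpath : ∀ (u v : V) (p : G.Walk u v), p.IsPath → (p.edges.map w).sum = d u v := by
    intro u v p hp
    obtain ⟨p', hp', hc⟩ := (hd u v).1
    rw [hc, TcAux.tree_path_eq hG hp' hp]
  have hdadj : ∀ a b : V, ∀ _ : G.Adj a b, d a b = w s(a, b) := by
    intro a b h
    have hp : (SimpleGraph.Walk.cons h SimpleGraph.Walk.nil).IsPath := by
      simp [SimpleGraph.Walk.cons_isPath_iff, h.ne]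
    have h2 := hdpath a b _ hp
    simpa using h2.symm
  have hrhs : (∑' e : G.edgeSet, w ↑e * |F ↑e|) = ∑ e ∈ S, w e * |F e| := by
    have h1 : (∑' e : G.edgeSet, w ↑e * |F ↑e|)
        = ∑ e ∈ S.subtype (fun e => e ∈ G.edgeSet), w ↑e * |F ↑e| := by
      refine tsum_eq_sum ?_
      intro b hb
      have hb' : ↑b ∉ S := fun hc => hb (Finset.mem_subtype.mpr hc)
      rw [hF0 _ hb', abs_zero, mul_zero]
    rw [h1]
    exact Finset.sum_subtype_eq_sum_filter (fun e => w e * |F e|) (s := S) (p := fun e => e ∈ G.edgeSet) |>.trans (by rw [Finset.filter_true_of_mem hSe])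
  have hkey : ∀ m : V,
      ∑ e ∈ S, F e * ((if fr e = m then (1 : ℝ) else 0) - (if nr e = m then (1 : ℝ) else 0))
        = μ m := by
    intro m
    calc ∑ e ∈ S, F e * ((if fr e = m then (1:ℝ) else 0) - (if nr e = m then (1:ℝ) else 0))
        = ∑ e ∈ S, ∑ x ∈ μ.support, μ x * ((if e ∈ (P x).edges then (1:ℝ) else 0) *
            ((if fr e = m then (1:ℝ) else 0) - (if nr e = m then (1:ℝ) else 0))) := by
          refine Finset.sum_congr rfl fun e _ => ?_
          rw [hF2 e, Finset.sum_mul]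
          exact Finset.sum_congr rfl fun x _ => by ring
      _ = ∑ x ∈ μ.support, ∑ e ∈ S, μ x * ((if e ∈ (P x).edges then (1:ℝ) else 0) *
            ((if fr e = m then (1:ℝ) else 0) - (if nr e = m then (1:ℝ) else 0))) :=
          Finset.sum_comm
      _ = ∑ x ∈ μ.support, μ x * (((P x).edges.map
            (fun e => (if fr e = m then (1:ℝ) else 0) - (if nr e = m then (1:ℝ) else 0))).sum) := by
          refine Finset.sum_congr rfl fun x hx => ?_
          rw [← Finset.mul_sum]
          congr 1
          have hsub : (P x).edges.toFinset ⊆ S :=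
            fun e he => Finset.mem_biUnion.mpr ⟨x, hx, he⟩
          have h1 : ∑ e ∈ S, (if e ∈ (P x).edges then (1:ℝ) else 0) *
              ((if fr e = m then (1:ℝ) else 0) - (if nr e = m then (1:ℝ) else 0))
              = ∑ e ∈ (P x).edges.toFinset, (if e ∈ (P x).edges then (1:ℝ) else 0) *
              ((if fr e = m then (1:ℝ) else 0) - (if nr e = m then (1:ℝ) else 0)) := by
            refine (Finset.sum_subset hsub fun e _ he => ?_).symm
            rw [if_neg (fun hc => he (List.mem_toFinset.mpr hc)), zero_mul]
          rw [h1]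
          rw [← List.sum_toFinset _ ((hP x).edges_nodup)]
          exact Finset.sum_congr rfl fun e he => by
            rw [if_pos (List.mem_toFinset.mp he), one_mul]
      _ = ∑ x ∈ μ.support, μ x *
            ((if x = m then (1:ℝ) else 0) - (if v₀ = m then (1:ℝ) else 0)) := by
          refine Finset.sum_congr rfl fun x _ => ?_
          rw [TcAux.tele hG hP hadj heq hPc (P x).length x rfl m]
      _ = μ m := by
          have hs1 : ∑ x ∈ μ.support, μ x * (if x = m then (1:ℝ) else 0) = μ m := by
            by_cases hm : m ∈ μ.support
            · rw [Finset.sum_eq_single m]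
              · rw [if_pos rfl, mul_one]
              · intro x _ hxm
                rw [if_neg hxm, mul_zero]
              · exact fun hc => absurd hm hc
            · rw [Finset.sum_eq_zero, (Finsupp.notMem_support_iff.mp hm)]
              intro x hx
              have : x ≠ m := fun hc => hm (hc ▸ hx)
              rw [if_neg this, mul_zero]
          have hs2 : ∑ x ∈ μ.support, μ x * (if v₀ = m then (1:ℝ) else 0) = 0 := by
            rw [← Finset.sum_mul, hsum0, zero_mul]
          simp only [mul_sub]
          rw [Finset.sum_sub_distrib, hs1, hs2, sub_zero]
  have hmem : (∑ e ∈ S, w e * |F e|) ∈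
      {c | ∃ (n : ℕ) (r : Fin n → ℝ) (x y : Fin n → V), IsMolRep ⇑μ r x y ∧ c = molCost d r x y} := by
    set S₀ : Finset (Sym2 V) := S.filter (fun e => F e ≠ 0) with hS₀
    have hS₀S : S₀ ⊆ S := Finset.filter_subset _ _
    set n : ℕ := S₀.card with hn
    set ε : Fin n → Sym2 V := fun j => ((S₀.equivFin.symm j : ↥S₀) : Sym2 V) with hε
    have hεmem : ∀ j, ε j ∈ S₀ := fun j => (S₀.equivFin.symm j).2
    have hεsum : ∀ g : Sym2 V → ℝ, ∑ j : Fin n, g (ε j) = ∑ e ∈ S₀, g e := by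
      intro g
      rw [← Finset.sum_coe_sort S₀ g]
      exact (Fintype.sum_equiv S₀.equivFin _ _ (fun a => by simp [hε])).symm
    have hεedge : ∀ j, ε j ∈ G.edgeSet := fun j => hSe _ (hS₀S (hεmem j))
    have hεne : ∀ j, F (ε j) ≠ 0 := fun j => (Finset.mem_filter.mp (hεmem j)).2
    refine ⟨n, fun j => |F (ε j)|,
      fun j => if 0 < F (ε j) then fr (ε j) else nr (ε j),
      fun j => if 0 < F (ε j) then nr (ε j) else fr (ε j), ⟨?_, ?_, ?_⟩, ?_⟩
    · exact fun j => abs_pos.mpr (hεne j)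
    · intro j
      by_cases hj : 0 < F (ε j) <;> simp only [hj, if_pos, if_neg, if_true, if_false]
      · exact (hadj _ (hεedge j)).ne'
      · exact (hadj _ (hεedge j)).ne
    · intro m
      have hper : ∀ j : Fin n, |F (ε j)| *
          ((if (if 0 < F (ε j) then fr (ε j) else nr (ε j)) = m then (1:ℝ) else 0)
            - (if (if 0 < F (ε j) then nr (ε j) else fr (ε j)) = m then (1:ℝ) else 0))
          = F (ε j) * ((if fr (ε j) = m then (1:ℝ) else 0) - (if nr (ε j) = m then (1:ℝ) else 0)) := by
        intro j
        by_cases hj : 0 < F (ε j)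
        · simp only [hj, if_true, abs_of_pos hj]
        · have hneg : F (ε j) < 0 := lt_of_le_of_ne (not_lt.mp hj) (hεne j)
          simp only [hj, if_false, abs_of_neg hneg]
          ring
      rw [show (∑ j : Fin n, |F (ε j)| *
          ((if (if 0 < F (ε j) then fr (ε j) else nr (ε j)) = m then (1:ℝ) else 0)
            - (if (if 0 < F (ε j) then nr (ε j) else fr (ε j)) = m then (1:ℝ) else 0)))
          = ∑ j : Fin n, F (ε j) * ((if fr (ε j) = m then (1:ℝ) else 0)
            - (if nr (ε j) = m then (1:ℝ) else 0)) from Finset.sum_congr rfl fun j _ => hper j]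
      rw [hεsum (fun e => F e * ((if fr e = m then (1:ℝ) else 0) - (if nr e = m then (1:ℝ) else 0)))]
      rw [hS₀, Finset.sum_filter_of_ne (fun e _ hne0 => left_ne_zero_of_mul hne0)]
      exact (hkey m).symm
    · rw [molCost]
      have hper : ∀ j : Fin n, |F (ε j)| *
          d (if 0 < F (ε j) then fr (ε j) else nr (ε j)) (if 0 < F (ε j) then nr (ε j) else fr (ε j))
          = w (ε j) * |F (ε j)| := by
        intro j
        have he := hεedge j
        have hwnr : d (nr (ε j)) (fr (ε j)) = w (ε j) := by
          rw [hdadj _ _ (hadj _ he), ← heq _ he]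
        have hwfr : d (fr (ε j)) (nr (ε j)) = w (ε j) := by
          rw [hdadj _ _ (hadj _ he).symm, Sym2.eq_swap, ← heq _ he]
        by_cases hj : 0 < F (ε j) <;>
          simp only [hj, if_true, if_false, hwnr, hwfr, mul_comm]
      rw [show (∑ j : Fin n, |F (ε j)| *
          d (if 0 < F (ε j) then fr (ε j) else nr (ε j))
            (if 0 < F (ε j) then nr (ε j) else fr (ε j)))
          = ∑ j : Fin n, w (ε j) * |F (ε j)| from Finset.sum_congr rfl fun j _ => hper j]
      rw [hεsum (fun e => w e * |F e|)]
      refine (Finset.sum_subset hS₀S fun e heS heS₀ => ?_).symm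
      have hFz : F e = 0 := by
        by_contra hc
        exact heS₀ (Finset.mem_filter.mpr ⟨heS, hc⟩)
      rw [hFz, abs_zero, mul_zero]
  have hlow : ∀ c ∈
      {c | ∃ (n : ℕ) (r : Fin n → ℝ) (x y : Fin n → V), IsMolRep ⇑μ r x y ∧ c = molCost d r x y},
      (∑ e ∈ S, w e * |F e|) ≤ c := by
    rintro c ⟨n', r, xs, ys, ⟨hr, hxy, hrep⟩, rfl⟩
    have hq : ∀ j : Fin n', ∃ p : G.Walk (xs j) (ys j),
        p.IsPath ∧ d (xs j) (ys j) = (p.edges.map w).sum := fun j => (hd (xs j) (ys j)).1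
    choose q hq1 hq2 using hq
    set S₁ : Finset (Sym2 V) := S ∪ Finset.univ.biUnion (fun j => (q j).edges.toFinset) with hS₁
    have hS₁e : ∀ e ∈ S₁, e ∈ G.edgeSet := by
      intro e he
      rcases Finset.mem_union.mp he with h1 | h1
      · exact hSe _ h1
      · obtain ⟨j, -, hj⟩ := Finset.mem_biUnion.mp h1
        exact SimpleGraph.Walk.edges_subset_edgeSet _ (List.mem_toFinset.mp hj)
    have hstep1 : ∑ e ∈ S, w e * |F e| = ∑ e ∈ S₁, w e * |F e| :=
      Finset.sum_subset Finset.subset_union_left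
        (fun e _ he => by rw [hF0 e he, abs_zero, mul_zero])
    set B : Finset V := μ.support ∪ Finset.image xs Finset.univ ∪ Finset.image ys Finset.univ
      with hB
    have hxB : ∀ j, xs j ∈ B := fun j => Finset.mem_union.mpr (Or.inl (Finset.mem_union.mpr
      (Or.inr (Finset.mem_image.mpr ⟨j, Finset.mem_univ j, rfl⟩))))
    have hyB : ∀ j, ys j ∈ B := fun j => Finset.mem_union.mpr
      (Or.inr (Finset.mem_image.mpr ⟨j, Finset.mem_univ j, rfl⟩))
    have hsB : μ.support ⊆ B :=
      fun u hu => Finset.mem_union.mpr (Or.inl (Finset.mem_union.mpr (Or.inl hu)))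
    have hFrep : ∀ e, F e = ∑ j : Fin n', r j *
        ((if e ∈ (P (xs j)).edges then (1:ℝ) else 0)
          - (if e ∈ (P (ys j)).edges then (1:ℝ) else 0)) := by
      intro e
      have h1 : F e = ∑ u ∈ B, μ u * (if e ∈ (P u).edges then (1:ℝ) else 0) := by
        rw [hF2 e]
        refine Finset.sum_subset hsB fun u _ hu => ?_
        rw [Finsupp.notMem_support_iff.mp hu, zero_mul]
      rw [h1]
      calc ∑ u ∈ B, μ u * (if e ∈ (P u).edges then (1:ℝ) else 0)
          = ∑ u ∈ B, ∑ j : Fin n', r j * (((if xs j = u then (1:ℝ) else 0)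
              - (if ys j = u then (1:ℝ) else 0)) * (if e ∈ (P u).edges then (1:ℝ) else 0)) := by
            refine Finset.sum_congr rfl fun u _ => ?_
            rw [hrep u, Finset.sum_mul]
            exact Finset.sum_congr rfl fun j _ => by ring
        _ = ∑ j : Fin n', ∑ u ∈ B, r j * (((if xs j = u then (1:ℝ) else 0)
              - (if ys j = u then (1:ℝ) else 0)) * (if e ∈ (P u).edges then (1:ℝ) else 0)) :=
            Finset.sum_comm
        _ = ∑ j : Fin n', r j * ((if e ∈ (P (xs j)).edges then (1:ℝ) else 0)
              - (if e ∈ (P (ys j)).edges then (1:ℝ) else 0)) := by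
            refine Finset.sum_congr rfl fun j _ => ?_
            rw [← Finset.mul_sum]
            congr 1
            have hgen : ∀ z : V, z ∈ B → ∑ u ∈ B, (if z = u then (1:ℝ) else 0)
                * (if e ∈ (P u).edges then (1:ℝ) else 0)
                = (if e ∈ (P z).edges then (1:ℝ) else 0) := by
              intro z hz
              rw [show (∑ u ∈ B, (if z = u then (1:ℝ) else 0)
                    * (if e ∈ (P u).edges then (1:ℝ) else 0))
                  = ∑ u ∈ B, (if z = u then (if e ∈ (P u).edges then (1:ℝ) else 0) else 0) from
                Finset.sum_congr rfl fun u _ => by by_cases h : z = u <;> simp [h]]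
              rw [Finset.sum_ite_eq B z (fun u => if e ∈ (P u).edges then (1:ℝ) else 0),
                if_pos hz]
            rw [show (∑ u ∈ B, ((if xs j = u then (1:ℝ) else 0) - (if ys j = u then (1:ℝ) else 0))
                  * (if e ∈ (P u).edges then (1:ℝ) else 0))
                = ∑ u ∈ B, ((if xs j = u then (1:ℝ) else 0)
                    * (if e ∈ (P u).edges then (1:ℝ) else 0)
                  - (if ys j = u then (1:ℝ) else 0)
                    * (if e ∈ (P u).edges then (1:ℝ) else 0)) from
              Finset.sum_congr rfl fun u _ => by ring]
            rw [Finset.sum_sub_distrib, hgen _ (hxB j), hgen _ (hyB j)]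
    obtain ⟨ψ, hψ⟩ : ∃ ψ : Fin n' → Sym2 V → ℝ, ∀ j e,
        ψ j e = (((q j).edges.map (fun e' => if e' = e then (1:ℝ) else 0)).sum) :=
      ⟨_, fun _ _ => rfl⟩
    have habs : ∀ e, |F e| ≤ ∑ j : Fin n', r j * ψ j e := by
      intro e
      rw [hFrep e]
      refine (Finset.abs_sum_le_sum_abs _ _).trans (Finset.sum_le_sum fun j _ => ?_)
      rw [abs_mul, abs_of_pos (hr j), hψ]
      exact mul_le_mul_of_nonneg_left (TcAux.phi_walk hG hP (q j) e) (le_of_lt (hr j))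
    have hinner : ∀ j : Fin n', ∑ e ∈ S₁, w e * ψ j e = d (xs j) (ys j) := by
      intro j
      have hQsub : (q j).edges.toFinset ⊆ S₁ := fun e he =>
        Finset.mem_union.mpr (Or.inr (Finset.mem_biUnion.mpr ⟨j, Finset.mem_univ j, he⟩))
      have hstep : ∀ e, w e * ψ j e = ∑ e' ∈ (q j).edges.toFinset, (if e' = e then w e else 0) := by
        intro e
        rw [hψ, ← List.sum_toFinset _ ((hq1 j).edges_nodup), Finset.mul_sum]
        refine Finset.sum_congr rfl fun e' _ => ?_
        by_cases h : e' = e <;> simp [h]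
      calc ∑ e ∈ S₁, w e * ψ j e
          = ∑ e ∈ S₁, ∑ e' ∈ (q j).edges.toFinset, (if e' = e then w e else 0) :=
            Finset.sum_congr rfl fun e _ => hstep e
        _ = ∑ e' ∈ (q j).edges.toFinset, ∑ e ∈ S₁, (if e' = e then w e else 0) :=
            Finset.sum_comm
        _ = ∑ e' ∈ (q j).edges.toFinset, w e' := by
            refine Finset.sum_congr rfl fun e' he' => ?_
            rw [Finset.sum_ite_eq S₁ e' w, if_pos (hQsub he')]
        _ = d (xs j) (ys j) := by
            rw [List.sum_toFinset _ ((hq1 j).edges_nodup), ← hq2 j]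
    have hswap : ∀ e, w e * (∑ j : Fin n', r j * ψ j e)
        = ∑ j : Fin n', r j * (w e * ψ j e) := by
      intro e
      rw [Finset.mul_sum]
      exact Finset.sum_congr rfl fun j _ => by ring
    calc ∑ e ∈ S, w e * |F e| = ∑ e ∈ S₁, w e * |F e| := hstep1
      _ ≤ ∑ e ∈ S₁, w e * (∑ j : Fin n', r j * ψ j e) := by
          refine Finset.sum_le_sum fun e he => ?_
          exact mul_le_mul_of_nonneg_left (habs e) (le_of_lt (hw e (hS₁e e he)))
      _ = ∑ e ∈ S₁, ∑ j : Fin n', r j * (w e * ψ j e) :=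
          Finset.sum_congr rfl fun e _ => hswap e
      _ = ∑ j : Fin n', ∑ e ∈ S₁, r j * (w e * ψ j e) := Finset.sum_comm
      _ = ∑ j : Fin n', r j * d (xs j) (ys j) := by
          refine Finset.sum_congr rfl fun j _ => ?_
          rw [← Finset.mul_sum, hinner j]
      _ = molCost d r xs ys := rfl
  have hgoal : (∑' e : G.edgeSet, w ↑e * |∑ x ∈ μ.support.filter fun x => ↑e ∈ (P x).edges, μ x|)
      = ∑ e ∈ S, w e * |F e| := by
    simp only [← hFe]
    exact hrhs
  rw [hgoal, tcNorm]
  exact le_antisymm (csInf_le ⟨_, hlow⟩ hmem) (le_csInf ⟨_, hmem⟩ hlow)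
end

section
/- Let T = (V,E) be a (finite or countable) tree with weight function w: E → (0,∞) and geodesic metric d_T, and fix a root v₀ ∈ V. Then the linear map I: F̃(V) → ℓ₁(E) defined by I(μ) = (w(e)·μ(T_e))_{e∈E} is an isometry from (F̃(V), ‖·‖_tc) into ℓ₁(E) with dense range; hence the completion of (F̃(V), ‖·‖_tc) is isometrically isomorphic to ℓ₁(E). -/
open scoped BigOperators Classical

section Aux
open SimpleGraph Walk

namespace TreeAux

variable {V : Type*} {G : SimpleGraph V} {v₀ : V}

lemma path_eq (hG : G.IsAcyclic) {x y : V} {p q : G.Walk x y} (hp : p.IsPath) (hq : q.IsPath) :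
    p = q := congrArg Subtype.val (hG.path_unique ⟨p, hp⟩ ⟨q, hq⟩)

lemma isPath_concat {u v x : V} {p : G.Walk u v} (h : G.Adj v x) (hp : p.IsPath)
    (hx : x ∉ p.support) : (p.concat h).IsPath := by
  rw [← isPath_reverse_iff, reverse_concat]
  exact hp.reverse.cons (by simpa using hx)

lemma single_edge_path {u v : V} (h : G.Adj u v) : (Walk.cons h Walk.nil).IsPath :=
  Walk.IsPath.nil.cons (by simp [h.ne])

lemma step (hG : G.IsTree) (P : ∀ x : V, G.Walk v₀ x) (hP : ∀ x, (P x).IsPath)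
    {u v : V} (h : G.Adj u v) :
    P v = (P u).concat h ∨ P u = (P v).concat h.symm := by
  by_cases hv : v ∈ (P u).support
  · right
    have ht : (P u).takeUntil v hv = P v := path_eq hG.IsAcyclic ((hP u).takeUntil hv) (hP v)
    have hdu : (P u).dropUntil v hv = Walk.cons h.symm Walk.nil :=
      path_eq hG.IsAcyclic ((hP u).dropUntil hv) (single_edge_path h.symm)
    calc P u = ((P u).takeUntil v hv).append ((P u).dropUntil v hv) := (take_spec _ hv).symm
    _ = (P v).concat h.symm := by rw [ht, hdu, concat_eq_append]
  · left
    exact (path_eq hG.IsAcyclic (isPath_concat h (hP u) hv) (hP v)).symm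

/-- last edge of a path-concat is not among the earlier edges -/
lemma not_mem_edges_of_concat_path {u x : V} {q : G.Walk v₀ u} {h : G.Adj u x}
    (hp : (q.concat h).IsPath) : s(u, x) ∉ q.edges := by
  have hnd := hp.isTrail.edges_nodup
  rw [edges_concat] at hnd
  have := (List.concat_eq_append (as := q.edges) (a := s(u,x))) ▸ hnd
  rw [List.nodup_append'] at this
  intro hmem
  exact this.2.2 hmem (by simp)

def Cpred (P : ∀ x : V, G.Walk v₀ x) (e : Sym2 V) : Prop :=
  ∃ u v : V, e = s(u, v) ∧ e ∈ (P v).edges ∧ e ∉ (P u).edges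

noncomputable def botOf (P : ∀ x : V, G.Walk v₀ x) (e : Sym2 V) : V :=
  if h : Cpred P e then h.choose else v₀

noncomputable def topOf (P : ∀ x : V, G.Walk v₀ x) (e : Sym2 V) : V :=
  if h : Cpred P e then h.choose_spec.choose else v₀

lemma top_bot_spec (P : ∀ x : V, G.Walk v₀ x) {e : Sym2 V} {u v : V}
    (h1 : e = s(u, v)) (h2 : e ∈ (P v).edges) (h3 : e ∉ (P u).edges) :
    topOf P e = v ∧ botOf P e = u := by
  have hC : Cpred P e := ⟨u, v, h1, h2, h3⟩
  rw [topOf, botOf, dif_pos hC, dif_pos hC]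
  obtain ⟨h1', h2', h3'⟩ := hC.choose_spec.choose_spec
  rcases Sym2.eq_iff.mp (h1'.symm.trans h1) with ⟨ha, hb⟩ | ⟨ha, hb⟩
  · exact ⟨hb, ha⟩
  · exfalso; rw [ha] at h3'; exact h3' h2

lemma cpred_concat (hG : G.IsTree) (P : ∀ x : V, G.Walk v₀ x) (hP : ∀ x, (P x).IsPath)
    {e : Sym2 V} {u v : V} (h1 : e = s(u, v)) (h2 : e ∈ (P v).edges) (h3 : e ∉ (P u).edges) :
    ∃ h : G.Adj u v, P v = (P u).concat h := by
  have hadj : G.Adj u v := (P v).edges_subset_edgeSet (h1 ▸ h2)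
  rcases step hG P hP hadj with hc | hc
  · exact ⟨hadj, hc⟩
  · exfalso; apply h3; rw [hc, edges_concat]
    simp [h1, Sym2.eq_swap]

lemma cpred_of_edgeSet (hG : G.IsTree) (P : ∀ x : V, G.Walk v₀ x) (hP : ∀ x, (P x).IsPath)
    {e : Sym2 V} (he : e ∈ G.edgeSet) : Cpred P e := by
  induction e with
  | _ u v =>
    have h : G.Adj u v := he
    rcases step hG P hP h with hc | hc
    · refine ⟨u, v, rfl, ?_, ?_⟩
      · rw [hc, edges_concat]; simp
      · exact not_mem_edges_of_concat_path (hc ▸ hP v)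
    · refine ⟨v, u, Sym2.eq_swap, ?_, ?_⟩
      · rw [hc, edges_concat]; simp [Sym2.eq_swap]
      · have := not_mem_edges_of_concat_path (hc ▸ hP u)
        simpa [Sym2.eq_swap] using this

lemma adj_top_bot (hG : G.IsTree) (P : ∀ x : V, G.Walk v₀ x) (hP : ∀ x, (P x).IsPath)
    {e : Sym2 V} (he : e ∈ G.edgeSet) :
    G.Adj (botOf P e) (topOf P e) ∧ e = s(botOf P e, topOf P e) := by
  obtain ⟨u, v, h1, h2, h3⟩ := cpred_of_edgeSet hG P hP he
  obtain ⟨ht, hb⟩ := top_bot_spec P h1 h2 h3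
  rw [ht, hb, ← h1]
  refine ⟨?_, rfl⟩
  rw [← SimpleGraph.mem_edgeSet, ← h1]; exact he

/-- Fact A : the root-path indicator of the top differs from that of the bottom exactly at `e`. -/
lemma chi_top_sub_bot (hG : G.IsTree) (P : ∀ x : V, G.Walk v₀ x) (hP : ∀ x, (P x).IsPath)
    {e : Sym2 V} (he : e ∈ G.edgeSet) (e' : Sym2 V) :
    (if e' ∈ (P (topOf P e)).edges then (1:ℝ) else 0)
      - (if e' ∈ (P (botOf P e)).edges then (1:ℝ) else 0)
      = (if e' = e then (1:ℝ) else 0) := by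
  obtain ⟨u, v, h1, h2, h3⟩ := cpred_of_edgeSet hG P hP he
  obtain ⟨ht, hb⟩ := top_bot_spec P h1 h2 h3
  obtain ⟨hadj, hcat⟩ := cpred_concat hG P hP h1 h2 h3
  rw [ht, hb, hcat, edges_concat]
  by_cases h4 : e' = e
  · subst h4
    rw [if_pos (by simp [h1]), if_neg h3, if_pos rfl]; norm_num
  · rw [if_neg h4]
    have : e' ∈ (P u).edges.concat s(u, v) ↔ e' ∈ (P u).edges := by
      simp only [List.concat_eq_append, List.mem_append, List.mem_singleton]
      constructor
      · rintro (h | h)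
        · exact h
        · exact absurd (h.trans h1.symm) h4
      · exact Or.inl
    by_cases h5 : e' ∈ (P u).edges
    · rw [if_pos (this.mpr h5), if_pos h5, sub_self]
    · rw [if_neg (fun hh => h5 (this.mp hh)), if_neg h5, sub_self]

lemma abs_chi_sub (hG : G.IsTree) (P : ∀ x : V, G.Walk v₀ x) (hP : ∀ x, (P x).IsPath)
    {u v : V} (h : G.Adj u v) (e' : Sym2 V) :
    |(if e' ∈ (P u).edges then (1:ℝ) else 0) - (if e' ∈ (P v).edges then (1:ℝ) else 0)|
      = if e' = s(u, v) then (1:ℝ) else 0 := by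
  have he : s(u,v) ∈ G.edgeSet := h
  have key := chi_top_sub_bot hG P hP he e'
  obtain ⟨hadj, hs⟩ := adj_top_bot hG P hP he
  rcases Sym2.eq_iff.mp hs.symm with ⟨ha, hb⟩ | ⟨ha, hb⟩
  · rw [ha, hb] at key
    rw [abs_sub_comm, key]
    split <;> norm_num
  · rw [ha, hb] at key
    rw [key]
    split <;> norm_num

/-- Telescoping sum along a rooted path. -/
lemma telescope (hG : G.IsTree) (P : ∀ x : V, G.Walk v₀ x) (hP : ∀ x, (P x).IsPath) (m : V) :
    ∀ {a x : V} (p : G.Walk a x), a = v₀ → p.IsPath →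
      (p.edges.map (fun e => (if topOf P e = m then (1:ℝ) else 0)
          - (if botOf P e = m then (1:ℝ) else 0))).sum
        = (if x = m then (1:ℝ) else 0) - (if a = m then (1:ℝ) else 0) := by
  intro a x p
  induction p using SimpleGraph.Walk.concatRec with
  | Hnil => intro _ _; simp
  | Hconcat q h ih =>
    rename_i a' u x'
    intro ha hp
    subst ha
    have hq : q.IsPath := by
      rw [concat_eq_append] at hp
      exact hp.of_append_left
    have hPx : P x' = q.concat h := path_eq hG.IsAcyclic (hP x') hp
    have hPu : P u = q := path_eq hG.IsAcyclic (hP u) hq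
    have h2 : s(u, x') ∈ (P x').edges := by rw [hPx, edges_concat]; simp
    have h3 : s(u, x') ∉ (P u).edges := by rw [hPu]; exact not_mem_edges_of_concat_path hp
    obtain ⟨ht, hb⟩ := top_bot_spec P rfl h2 h3
    rw [edges_concat, List.concat_eq_append, List.map_append, List.sum_append]
    rw [ih rfl hq]
    simp only [List.map_singleton, List.sum_singleton, ht, hb]
    ring

lemma dist_adj (hG : G.IsTree) {w : Sym2 V → ℝ} {d : V → V → ℝ}
    (hd : ∀ u v : V, IsLeast { c | ∃ p : G.Walk u v, p.IsPath ∧ c = (p.edges.map w).sum } (d u v))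
    {u v : V} (h : G.Adj u v) : d u v = w s(u, v) := by
  obtain ⟨p, hp, hsum⟩ := (hd u v).1
  have hpe : p = Walk.cons h Walk.nil := path_eq hG.IsAcyclic hp (single_edge_path h)
  rw [hpe] at hsum
  simpa using hsum

lemma sum_abs_le_walk (hG : G.IsTree) (P : ∀ x : V, G.Walk v₀ x) (hP : ∀ x, (P x).IsPath)
    {w : Sym2 V → ℝ} (hw : ∀ e ∈ G.edgeSet, 0 < w e) (F : Finset (Sym2 V)) :
    ∀ {a b : V} (p : G.Walk a b),
      ∑ e ∈ F, w e * |(if e ∈ (P a).edges then (1:ℝ) else 0)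
          - (if e ∈ (P b).edges then (1:ℝ) else 0)|
        ≤ (p.edges.map w).sum := by
  intro a b p
  induction p with
  | nil => simp
  | @cons u c b h q ih =>
    have hwe : 0 ≤ w s(u, c) := le_of_lt (hw _ h)
    have hpt : ∀ e ∈ F, w e * |(if e ∈ (P u).edges then (1:ℝ) else 0)
          - (if e ∈ (P b).edges then (1:ℝ) else 0)|
        ≤ w e * |(if e ∈ (P c).edges then (1:ℝ) else 0)
          - (if e ∈ (P b).edges then (1:ℝ) else 0)| + (if e = s(u, c) then w e else 0) := by
      intro e _
      have habs := abs_chi_sub hG P hP h e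
      by_cases he : e = s(u, c)
      · rw [if_pos he, he] at habs ⊢
        have h1 : ∀ A B C : ℝ, |A - B| = 1 → |A - C| ≤ |B - C| + 1 := by
          intro A B C hAB
          have h2 : |A - C| ≤ |A - B| + |B - C| := abs_sub_le A B C
          rw [hAB] at h2; linarith
        have h2 := h1 _ _ (if s(u,c) ∈ (P b).edges then (1:ℝ) else 0) habs
        have h3 := mul_le_mul_of_nonneg_left h2 hwe
        rw [mul_add, mul_one] at h3
        exact h3
      · rw [if_neg he] at habs ⊢
        have : (if e ∈ (P u).edges then (1:ℝ) else 0) = (if e ∈ (P c).edges then (1:ℝ) else 0) :=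
          sub_eq_zero.mp (abs_eq_zero.mp habs)
        rw [this, add_zero]
    calc ∑ e ∈ F, w e * |(if e ∈ (P u).edges then (1:ℝ) else 0)
          - (if e ∈ (P b).edges then (1:ℝ) else 0)|
        ≤ ∑ e ∈ F, (w e * |(if e ∈ (P c).edges then (1:ℝ) else 0)
          - (if e ∈ (P b).edges then (1:ℝ) else 0)| + (if e = s(u, c) then w e else 0)) :=
          Finset.sum_le_sum hpt
      _ = (∑ e ∈ F, w e * |(if e ∈ (P c).edges then (1:ℝ) else 0)
          - (if e ∈ (P b).edges then (1:ℝ) else 0)|) + ∑ e ∈ F, (if e = s(u, c) then w e else 0) :=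
          Finset.sum_add_distrib
      _ ≤ (q.edges.map w).sum + w s(u, c) := by
          refine add_le_add ih ?_
          rw [Finset.sum_ite_eq' F s(u, c) w]
          split <;> simp [hwe]
      _ = ((Walk.cons h q).edges.map w).sum := by
          rw [Walk.edges_cons]; simp [add_comm]

end TreeAux
end Aux

open TreeAux in
/-- For a (finite or countable) weighted tree `T = (V, E)` with geodesic metric `d` and root
`v₀`, the linear map `I : F̃(V) → ℓ₁(E)`, `I μ = (w e · μ(T_e))_{e ∈ E}`, is an isometry of
`(F̃(V), ‖·‖_tc)` into `ℓ₁(E)` with dense range; hence the completion of `(F̃(V), ‖·‖_tc)` is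
isometrically isomorphic to `ℓ₁(E)`. -/
theorem tree_free_space_isometric_ell1 {V : Type*} [Countable V] (G : SimpleGraph V)
    (hG : G.IsTree) (w : Sym2 V → ℝ) (hw : ∀ e ∈ G.edgeSet, 0 < w e)
    (d : V → V → ℝ) (hd : IsGeodesicOf G w d) (v₀ : V)
    (P : ∀ x : V, G.Walk v₀ x) (hP : ∀ x, (P x).IsPath) :
    (∀ μ : V →₀ ℝ, (μ.sum fun _ v => v) = 0 →
      Memℓp (fun e : G.edgeSet =>
        w ↑e * ∑ x ∈ μ.support.filter fun x => ↑e ∈ (P x).edges, μ x) 1 ∧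
      ∑' e : G.edgeSet, |w ↑e * ∑ x ∈ μ.support.filter fun x => ↑e ∈ (P x).edges, μ x|
        = tcNorm d ⇑μ) ∧
    (∀ g : lp (fun _ : G.edgeSet => ℝ) 1, ∀ ε > 0, ∃ μ : V →₀ ℝ,
      (μ.sum fun _ v => v) = 0 ∧
      ∑' e : G.edgeSet,
          |g e - w ↑e * ∑ x ∈ μ.support.filter fun x => ↑e ∈ (P x).edges, μ x| < ε) := by
  constructor
  · intro μ hμ
    have hμ0 : ∑ x ∈ μ.support, μ x = 0 := hμ
    set E₀ : Finset (Sym2 V) := μ.support.biUnion (fun x => (P x).edges.toFinset) with hE₀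
    have hE₀sub : ∀ e ∈ E₀, e ∈ G.edgeSet := by
      intro e he
      obtain ⟨x, _, he'⟩ := Finset.mem_biUnion.mp he
      exact (P x).edges_subset_edgeSet (List.mem_toFinset.mp he')
    have hwE : ∀ e ∈ E₀, 0 < w e := fun e he => hw e (hE₀sub e he)
    set c : Sym2 V → ℝ := fun e => ∑ x ∈ μ.support.filter (fun x => e ∈ (P x).edges), μ x
      with hcdef
    have hcapp : ∀ e, c e = ∑ x ∈ μ.support.filter (fun x => e ∈ (P x).edges), μ x :=
      fun e => rfl
    have hc0 : ∀ e, e ∉ E₀ → c e = 0 := by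
      intro e he
      rw [hcapp]
      have hemp : μ.support.filter (fun x => e ∈ (P x).edges) = ∅ :=
        Finset.filter_eq_empty_iff.mpr (fun {x} hx hex =>
          he (Finset.mem_biUnion.mpr ⟨x, hx, List.mem_toFinset.mpr hex⟩))
      rw [hemp, Finset.sum_empty]
    -- the key identity
    have hID : ∀ m : V, ∑ e ∈ E₀, c e * ((if topOf P e = m then (1:ℝ) else 0)
        - (if botOf P e = m then (1:ℝ) else 0)) = μ m := by
      intro m
      have step1 : ∀ e ∈ E₀, c e * ((if topOf P e = m then (1:ℝ) else 0)
          - (if botOf P e = m then (1:ℝ) else 0))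
          = ∑ x ∈ μ.support, (if e ∈ (P x).edges then
              μ x * ((if topOf P e = m then (1:ℝ) else 0)
                - (if botOf P e = m then (1:ℝ) else 0)) else 0) := by
        intro e _
        rw [hcapp, Finset.sum_filter, Finset.sum_mul]
        refine Finset.sum_congr rfl fun x _ => ?_
        split <;> simp
      rw [Finset.sum_congr rfl step1, Finset.sum_comm]
      have step2 : ∀ x ∈ μ.support, (∑ e ∈ E₀, (if e ∈ (P x).edges then
              μ x * ((if topOf P e = m then (1:ℝ) else 0)
                - (if botOf P e = m then (1:ℝ) else 0)) else 0))
          = μ x * ((if x = m then (1:ℝ) else 0) - (if v₀ = m then (1:ℝ) else 0)) := by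
        intro x hx
        rw [← Finset.sum_filter]
        have hfe : E₀.filter (fun e => e ∈ (P x).edges) = (P x).edges.toFinset := by
          ext e
          simp only [Finset.mem_filter, List.mem_toFinset]
          exact ⟨fun h => h.2, fun h =>
            ⟨Finset.mem_biUnion.mpr ⟨x, hx, List.mem_toFinset.mpr h⟩, h⟩⟩
        rw [hfe, ← Finset.mul_sum]
        congr 1
        rw [List.sum_toFinset _ (hP x).isTrail.edges_nodup]
        exact telescope hG P hP m (P x) rfl (hP x)
      rw [Finset.sum_congr rfl step2]
      have expand : ∀ x ∈ μ.support,
          μ x * ((if x = m then (1:ℝ) else 0) - (if v₀ = m then (1:ℝ) else 0))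
          = (if x = m then μ x else 0) - (if v₀ = m then μ x else 0) := by
        intro x _; split <;> split <;> ring
      rw [Finset.sum_congr rfl expand, Finset.sum_sub_distrib,
        Finset.sum_ite_eq' μ.support m μ]
      have h2 : (∑ x ∈ μ.support, if v₀ = m then μ x else 0) = 0 := by
        by_cases hv : v₀ = m <;> simp [hv, hμ0]
      rw [h2, sub_zero]
      by_cases hm : m ∈ μ.support
      · rw [if_pos hm]
      · rw [if_neg hm, Finsupp.notMem_support_iff.mp hm]
    -- membership: the optimal molecular representation
    set s' : Finset (Sym2 V) := E₀.filter (fun e => c e ≠ 0) with hs'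
    have hs'sub : s' ⊆ E₀ := Finset.filter_subset _ _
    have hconv : ∀ f : Sym2 V → ℝ,
        (∑ j : Fin s'.card, f ↑(s'.equivFin.symm j)) = ∑ e ∈ s', f e := by
      intro f
      rw [← Equiv.sum_comp s'.equivFin (fun j => f ↑(s'.equivFin.symm j))]
      simp only [Equiv.symm_apply_apply]
      exact Finset.sum_coe_sort s' f
    have hmem : (∑ e ∈ E₀, |w e * c e|) ∈ {cc | ∃ (n : ℕ) (r : Fin n → ℝ) (x y : Fin n → V),
        IsMolRep ⇑μ r x y ∧ cc = molCost d r x y} := by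
      refine ⟨s'.card,
        fun j => |c ↑(s'.equivFin.symm j)|,
        fun j => if 0 < c ↑(s'.equivFin.symm j) then topOf P ↑(s'.equivFin.symm j)
          else botOf P ↑(s'.equivFin.symm j),
        fun j => if 0 < c ↑(s'.equivFin.symm j) then botOf P ↑(s'.equivFin.symm j)
          else topOf P ↑(s'.equivFin.symm j),
        ⟨?_, ?_, ?_⟩, ?_⟩
      · intro j
        dsimp only
        have hj := Finset.mem_filter.mp (s'.equivFin.symm j).2
        exact abs_pos.mpr hj.2
      · intro j
        dsimp only
        have hj := (s'.equivFin.symm j).2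
        have hadj := (adj_top_bot hG P hP (hE₀sub _ (hs'sub hj))).1
        by_cases hc : 0 < c ↑(s'.equivFin.symm j)
        · rw [if_pos hc, if_pos hc]; exact hadj.ne'
        · rw [if_neg hc, if_neg hc]; exact hadj.ne
      · intro m
        have hform : ∀ e ∈ s', |c e| * ((if (if 0 < c e then topOf P e else botOf P e) = m
              then (1:ℝ) else 0) - (if (if 0 < c e then botOf P e else topOf P e) = m
              then (1:ℝ) else 0))
            = c e * ((if topOf P e = m then (1:ℝ) else 0)
              - (if botOf P e = m then (1:ℝ) else 0)) := by
          intro e he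
          replace he := Finset.mem_filter.mp he
          by_cases hc : 0 < c e
          · rw [if_pos hc, if_pos hc, abs_of_pos hc]
          · have hlt : c e < 0 := lt_of_le_of_ne (not_lt.mp hc) he.2
            rw [if_neg hc, if_neg hc, abs_of_neg hlt]
            ring
        calc μ m = ∑ e ∈ E₀, c e * ((if topOf P e = m then (1:ℝ) else 0)
              - (if botOf P e = m then (1:ℝ) else 0)) := (hID m).symm
          _ = ∑ e ∈ s', c e * ((if topOf P e = m then (1:ℝ) else 0)
              - (if botOf P e = m then (1:ℝ) else 0)) := by
              symm
              refine Finset.sum_subset hs'sub fun e heE hes => ?_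
              have : c e = 0 := by
                by_contra hne
                exact hes (Finset.mem_filter.mpr ⟨heE, hne⟩)
              rw [this, zero_mul]
          _ = ∑ e ∈ s', |c e| * ((if (if 0 < c e then topOf P e else botOf P e) = m
              then (1:ℝ) else 0) - (if (if 0 < c e then botOf P e else topOf P e) = m
              then (1:ℝ) else 0)) := (Finset.sum_congr rfl hform).symm
          _ = ∑ j : Fin s'.card, |c ↑(s'.equivFin.symm j)|
              * ((if (if 0 < c ↑(s'.equivFin.symm j) then topOf P ↑(s'.equivFin.symm j)
                  else botOf P ↑(s'.equivFin.symm j)) = m then (1:ℝ) else 0)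
                - (if (if 0 < c ↑(s'.equivFin.symm j) then botOf P ↑(s'.equivFin.symm j)
                  else topOf P ↑(s'.equivFin.symm j)) = m then (1:ℝ) else 0)) := by
              rw [hconv (fun e => |c e| * ((if (if 0 < c e then topOf P e else botOf P e) = m
                then (1:ℝ) else 0) - (if (if 0 < c e then botOf P e else topOf P e) = m
                then (1:ℝ) else 0)))]
      · -- cost computation
        have hcost : ∀ e ∈ s', |c e| * d (if 0 < c e then topOf P e else botOf P e)
              (if 0 < c e then botOf P e else topOf P e) = |w e * c e| := by
          intro e he
          have heE : e ∈ G.edgeSet := hE₀sub e (hs'sub he)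
          obtain ⟨hadj, hsym⟩ := adj_top_bot hG P hP heE
          have hd1 : d (topOf P e) (botOf P e) = w e := by
            rw [dist_adj hG hd hadj.symm, Sym2.eq_swap, ← hsym]
          have hd2 : d (botOf P e) (topOf P e) = w e := by
            rw [dist_adj hG hd hadj, ← hsym]
          have hwpos := hwE e (hs'sub he)
          by_cases hc : 0 < c e
          · rw [if_pos hc, if_pos hc, hd1, abs_mul, abs_of_pos hwpos]; ring
          · rw [if_neg hc, if_neg hc, hd2, abs_mul, abs_of_pos hwpos]; ring
        rw [molCost]
        rw [hconv (fun e => |c e| * d (if 0 < c e then topOf P e else botOf P e)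
          (if 0 < c e then botOf P e else topOf P e))]
        rw [Finset.sum_congr rfl hcost]
        symm
        refine Finset.sum_subset hs'sub fun e heE hes => ?_
        have : c e = 0 := by
          by_contra hne
          exact hes (Finset.mem_filter.mpr ⟨heE, hne⟩)
        rw [this, mul_zero, abs_zero]
    -- lower bound
    have hlb : ∀ cc ∈ {cc | ∃ (n : ℕ) (r : Fin n → ℝ) (x y : Fin n → V),
        IsMolRep ⇑μ r x y ∧ cc = molCost d r x y}, (∑ e ∈ E₀, |w e * c e|) ≤ cc := by
      rintro cc ⟨n, r, X, Y, ⟨hr, hXY, hrep⟩, rfl⟩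
      set T : Finset V := μ.support ∪ (Finset.image X Finset.univ ∪ Finset.image Y Finset.univ)
        with hT
      have hXT : ∀ j, X j ∈ T := fun j => Finset.mem_union_right _
        (Finset.mem_union_left _ (Finset.mem_image_of_mem X (Finset.mem_univ j)))
      have hYT : ∀ j, Y j ∈ T := fun j => Finset.mem_union_right _
        (Finset.mem_union_right _ (Finset.mem_image_of_mem Y (Finset.mem_univ j)))
      have hcT : ∀ e, c e = ∑ j, r j * ((if e ∈ (P (X j)).edges then (1:ℝ) else 0)
          - (if e ∈ (P (Y j)).edges then (1:ℝ) else 0)) := by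
        intro e
        have h1 : c e = ∑ x ∈ T, μ x * (if e ∈ (P x).edges then (1:ℝ) else 0) := by
          rw [hcapp, Finset.sum_filter]
          calc (∑ x ∈ μ.support, if e ∈ (P x).edges then μ x else 0)
              = ∑ x ∈ T, (if e ∈ (P x).edges then μ x else 0) :=
                Finset.sum_subset Finset.subset_union_left (fun x _ hx => by
                  rw [Finsupp.notMem_support_iff.mp hx]; simp)
            _ = ∑ x ∈ T, μ x * (if e ∈ (P x).edges then (1:ℝ) else 0) :=
                Finset.sum_congr rfl fun x _ => by split <;> simp
        rw [h1]
        have h2 : ∀ x ∈ T, μ x * (if e ∈ (P x).edges then (1:ℝ) else 0)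
            = ∑ j, r j * (((if X j = x then (1:ℝ) else 0) - (if Y j = x then (1:ℝ) else 0))
                * (if e ∈ (P x).edges then (1:ℝ) else 0)) := by
          intro x _
          rw [show μ x = ⇑μ x from rfl, hrep x, Finset.sum_mul]
          exact Finset.sum_congr rfl fun j _ => by ring
        rw [Finset.sum_congr rfl h2, Finset.sum_comm]
        refine Finset.sum_congr rfl fun j _ => ?_
        have expand : ∀ x ∈ T,
            r j * (((if X j = x then (1:ℝ) else 0) - (if Y j = x then (1:ℝ) else 0))
              * (if e ∈ (P x).edges then (1:ℝ) else 0))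
            = (if X j = x then r j * (if e ∈ (P x).edges then (1:ℝ) else 0) else 0)
              - (if Y j = x then r j * (if e ∈ (P x).edges then (1:ℝ) else 0) else 0) := by
          intro x _; split <;> split <;> ring
        rw [Finset.sum_congr rfl expand, Finset.sum_sub_distrib,
          Finset.sum_ite_eq T (X j), Finset.sum_ite_eq T (Y j),
          if_pos (hXT j), if_pos (hYT j)]
        ring
      calc ∑ e ∈ E₀, |w e * c e|
          ≤ ∑ e ∈ E₀, ∑ j, r j * (w e * |(if e ∈ (P (X j)).edges then (1:ℝ) else 0)
              - (if e ∈ (P (Y j)).edges then (1:ℝ) else 0)|) := by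
            refine Finset.sum_le_sum fun e he => ?_
            rw [abs_mul, abs_of_pos (hwE e he), hcT e]
            calc w e * |∑ j, r j * ((if e ∈ (P (X j)).edges then (1:ℝ) else 0)
                  - (if e ∈ (P (Y j)).edges then (1:ℝ) else 0))|
                ≤ w e * ∑ j, |r j * ((if e ∈ (P (X j)).edges then (1:ℝ) else 0)
                  - (if e ∈ (P (Y j)).edges then (1:ℝ) else 0))| :=
                  mul_le_mul_of_nonneg_left (Finset.abs_sum_le_sum_abs _ _)
                    (le_of_lt (hwE e he))
              _ = ∑ j, r j * (w e * |(if e ∈ (P (X j)).edges then (1:ℝ) else 0)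
                  - (if e ∈ (P (Y j)).edges then (1:ℝ) else 0)|) := by
                  rw [Finset.mul_sum]
                  refine Finset.sum_congr rfl fun j _ => ?_
                  rw [abs_mul, abs_of_pos (hr j)]
                  ring
        _ = ∑ j, r j * ∑ e ∈ E₀, w e * |(if e ∈ (P (X j)).edges then (1:ℝ) else 0)
              - (if e ∈ (P (Y j)).edges then (1:ℝ) else 0)| := by
            rw [Finset.sum_comm]
            exact Finset.sum_congr rfl fun j _ => (Finset.mul_sum _ _ _).symm
        _ ≤ ∑ j, r j * d (X j) (Y j) := by
            refine Finset.sum_le_sum fun j _ => ?_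
            refine mul_le_mul_of_nonneg_left ?_ (le_of_lt (hr j))
            obtain ⟨p, hp, hsum⟩ := (hd (X j) (Y j)).1
            rw [hsum]
            exact sum_abs_le_walk hG P hP hw E₀ p
        _ = molCost d r X Y := rfl
    have htc : tcNorm d ⇑μ = ∑ e ∈ E₀, |w e * c e| := IsLeast.csInf_eq ⟨hmem, hlb⟩
    constructor
    · apply memℓp_gen
      have hsummable : Summable (fun e : G.edgeSet => ‖w ↑e * c ↑e‖) := by
        refine summable_of_ne_finset_zero (s := E₀.subtype (· ∈ G.edgeSet)) ?_
        intro e he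
        have heE : ↑e ∉ E₀ := fun h => he (Finset.mem_subtype.mpr h)
        rw [hc0 _ heE]
        simp
      simpa [ENNReal.toReal_one] using hsummable
    · calc (∑' e : G.edgeSet, |w ↑e * c ↑e|)
          = ∑ e ∈ E₀.subtype (· ∈ G.edgeSet), |w ↑e * c ↑e| := by
            refine tsum_eq_sum fun e he => ?_
            have heE : ↑e ∉ E₀ := fun h => he (Finset.mem_subtype.mpr h)
            rw [hc0 _ heE]
            simp
        _ = ∑ e ∈ E₀, |w e * c e| := by
            exact Finset.sum_subtype_of_mem (p := fun x => x ∈ G.edgeSet) (fun e => |w e * c e|) hE₀sub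
        _ = tcNorm d ⇑μ := htc.symm

  · -- density
    intro g ε hε
    have htend := tendsto_tsum_compl_atTop_zero (fun e : G.edgeSet => |g e|)
    obtain ⟨s, hs⟩ : ∃ s : Finset G.edgeSet, ∑' (x : {x : G.edgeSet // x ∉ s}), |g ↑x| < ε :=
      (htend.eventually_lt_const hε).exists
    set cg : G.edgeSet → ℝ := fun e => g e / w ↑e with hcg
    set μ : V →₀ ℝ := ∑ e ∈ s, cg e •
      (Finsupp.single (topOf P ↑e) (1:ℝ) - Finsupp.single (botOf P ↑e) (1:ℝ)) with hμdef
    have hμx : ∀ x : V, μ x = ∑ e ∈ s, cg e *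
        ((if topOf P ↑e = x then (1:ℝ) else 0) - (if botOf P ↑e = x then (1:ℝ) else 0)) := by
      intro x
      rw [hμdef, Finset.sum_apply']
      refine Finset.sum_congr rfl fun e _ => ?_
      rw [Finsupp.smul_apply, Finsupp.sub_apply, Finsupp.single_apply, Finsupp.single_apply]
      simp [smul_eq_mul]
    have hsum0 : (μ.sum fun _ v => v) = 0 := by
      have hrepr : (Finsupp.lsum ℝ fun _ : V => (LinearMap.id : ℝ →ₗ[ℝ] ℝ)) μ = 0 := by
        rw [hμdef, map_sum]
        refine Finset.sum_eq_zero fun e _ => ?_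
        rw [map_smul, map_sub]
        simp
      rw [← hrepr]
      rfl
    refine ⟨μ, hsum0, ?_⟩
    have hI : ∀ e' : G.edgeSet, (∑ x ∈ μ.support.filter fun x => ↑e' ∈ (P x).edges, μ x)
        = if e' ∈ s then cg e' else 0 := by
      intro e'
      set T : Finset V := μ.support ∪ s.biUnion (fun e => {topOf P ↑e, botOf P ↑e}) with hT
      have h1 : (∑ x ∈ μ.support.filter fun x => ↑e' ∈ (P x).edges, μ x)
          = ∑ x ∈ T, μ x * (if ↑e' ∈ (P x).edges then (1:ℝ) else 0) := by
        rw [Finset.sum_filter]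
        rw [Finset.sum_subset (Finset.subset_union_left)]
        · refine Finset.sum_congr rfl fun x _ => ?_
          split <;> simp
        · intro x _ hx
          rw [Finsupp.notMem_support_iff.mp hx]
          simp
      rw [h1]
      have h2 : ∀ x ∈ T, μ x * (if ↑e' ∈ (P x).edges then (1:ℝ) else 0)
          = ∑ e ∈ s, cg e * (((if topOf P ↑e = x then (1:ℝ) else 0)
              - (if botOf P ↑e = x then (1:ℝ) else 0)) * (if ↑e' ∈ (P x).edges then (1:ℝ) else 0)) := by
        intro x _
        rw [hμx x, Finset.sum_mul]
        refine Finset.sum_congr rfl fun e _ => by ring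
      rw [Finset.sum_congr rfl h2, Finset.sum_comm]
      have h3 : ∀ e ∈ s, (∑ x ∈ T, cg e * (((if topOf P ↑e = x then (1:ℝ) else 0)
              - (if botOf P ↑e = x then (1:ℝ) else 0)) * (if ↑e' ∈ (P x).edges then (1:ℝ) else 0)))
          = if e' = e then cg e else 0 := by
        intro e he
        have htopT : topOf P ↑e ∈ T := by
          rw [hT]
          exact Finset.mem_union_right _ (Finset.mem_biUnion.mpr ⟨e, he, by simp⟩)
        have hbotT : botOf P ↑e ∈ T := by
          rw [hT]
          exact Finset.mem_union_right _ (Finset.mem_biUnion.mpr ⟨e, he, by simp⟩)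
        have expand : ∀ x ∈ T, cg e * (((if topOf P ↑e = x then (1:ℝ) else 0)
              - (if botOf P ↑e = x then (1:ℝ) else 0)) * (if ↑e' ∈ (P x).edges then (1:ℝ) else 0))
            = (if topOf P ↑e = x then cg e * (if ↑e' ∈ (P x).edges then (1:ℝ) else 0) else 0)
              - (if botOf P ↑e = x then cg e * (if ↑e' ∈ (P x).edges then (1:ℝ) else 0) else 0) := by
          intro x _
          split <;> split <;> ring
        rw [Finset.sum_congr rfl expand, Finset.sum_sub_distrib,
          Finset.sum_ite_eq T (topOf P ↑e), Finset.sum_ite_eq T (botOf P ↑e),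
          if_pos htopT, if_pos hbotT, ← mul_sub,
          chi_top_sub_bot hG P hP e.2 ↑e']
        by_cases hee : e' = e
        · subst hee; simp
        · rw [if_neg hee, if_neg (fun hc => hee (Subtype.ext hc)), mul_zero]
      rw [Finset.sum_congr rfl h3, Finset.sum_ite_eq s e' cg]
    have hterm : ∀ e : G.edgeSet,
        |g e - w ↑e * ∑ x ∈ μ.support.filter (fun x => ↑e ∈ (P x).edges), μ x|
          = if e ∈ s then 0 else |g e| := by
      intro e
      rw [hI e]
      by_cases he : e ∈ s
      · rw [if_pos he, if_pos he, hcg]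
        have hwne : w ↑e ≠ 0 := ne_of_gt (hw _ e.2)
        field_simp
        simp
      · rw [if_neg he, if_neg he]
        simp
    calc ∑' e : G.edgeSet, |g e - w ↑e * ∑ x ∈ μ.support.filter fun x => ↑e ∈ (P x).edges, μ x|
        = ∑' (x : {x : G.edgeSet // x ∉ s}), |g ↑x| := by
          rw [tsum_congr hterm]
          rw [← tsum_subtype_eq_of_support_subset (s := {x : G.edgeSet | x ∉ s})]
          · refine tsum_congr fun x => ?_
            rw [if_neg x.2]
          · intro x hx
            simp only [Function.mem_support] at hx
            by_contra hxs
            simp only [Set.mem_setOf_eq, not_not] at hxs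
            rw [if_pos hxs] at hx
            exact hx rfl
      _ < ε := hs
end
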